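/- arXiv:1702.08346 — 7 statements merged into one kernel-verified Lean document; each statement's English description precedes it below -/
import Mathlib

section
/- Let q be an irreducible reversible transition kernel on a finite set E with stationary distribution π and zero trace (q(x,x)=0 for all x). Let A, B : E × S^E → ℝ (with S = {0,1}) be arbitrary functions. Suppose that for all x, y with q(x,y) > 0 and all configurations ξ, whenever A(x,ξ) ≠ B(y,ξ) there exist z, z', z'' with q(x,z)q(z,z') > 0 and q(y,z'') > 0 such that either (1 ∈ {ξ(z),ξ(z')} and 0 ∈ {ξ(y),ξ(z'')}) or (0 ∈ {ξ(z),ξ(z')} and 1 ∈ {ξ(y),ξ(z'')}). Then there exists a constant C > 0 (depending only on the uniform bound of |A - B|) such that for all ξ, ∑_{x,y ∈ E} π(x) q(x,y) |A(x,ξ) - B(y,ξ)| ≤ C ∑_{ℓ=1}^{4} W_ℓ(ξ), where W_ℓ(ξ) = ∑_{x,y} π(x) q^ℓ(x,y) ξ(x)(1-ξ(y)). -/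
open Finset

private lemma pow_nonneg_entry {E : Type*} [Fintype E] [DecidableEq E]
    (q : Matrix E E ℝ) (hqnn : ∀ x y, 0 ≤ q x y) :
    ∀ (n : ℕ) (x y : E), 0 ≤ (q ^ n) x y := by
  intro n
  induction n with
  | zero =>
      intro x y
      rw [pow_zero]
      by_cases h : x = y <;> simp [Matrix.one_apply, h]
  | succ n ih =>
      intro x y
      rw [pow_succ, Matrix.mul_apply]
      exact Finset.sum_nonneg fun z _ => mul_nonneg (ih x z) (hqnn z y)

private lemma pow_entry_pos {E : Type*} [Fintype E] [DecidableEq E]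
    (q : Matrix E E ℝ) (hqnn : ∀ x y, 0 ≤ q x y) (m n : ℕ) (a c b : E)
    (h1 : 0 < (q ^ m) a c) (h2 : 0 < (q ^ n) c b) : 0 < (q ^ (m + n)) a b := by
  rw [pow_add, Matrix.mul_apply]
  refine lt_of_lt_of_le (mul_pos h1 h2) ?_
  exact Finset.single_le_sum
    (f := fun z => (q ^ m) a z * (q ^ n) z b)
    (fun z _ => mul_nonneg (pow_nonneg_entry q hqnn m a z) (pow_nonneg_entry q hqnn n z b))
    (Finset.mem_univ c)

/-- bound on the π-q-weighted sum of `|A(x,ξ) - B(y,ξ)|` by the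
two-point densities `W_ℓ(ξ)`, `ℓ = 1,…,4`, under the combinatorial condition on
where `A` and `B` can differ. -/
theorem stmt2 {E : Type*} [Fintype E] [DecidableEq E]
    (q : Matrix E E ℝ) (π : E → ℝ)
    (hqnn : ∀ x y, 0 ≤ q x y) (hq0 : ∀ x, q x x = 0)
    (hrow : ∀ x, ∑ y, q x y = 1)
    (hirr : ∀ x y, ∃ n, 0 < n ∧ 0 < (q ^ n) x y)
    (hπpos : ∀ x, 0 < π x) (hπ1 : ∑ x, π x = 1)
    (hrev : ∀ x y, π x * q x y = π y * q y x)
    (A B : E → (E → ℝ) → ℝ) (Kb : ℝ)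
    (hbd : ∀ x y (ξ : E → ℝ), (∀ z, ξ z = 0 ∨ ξ z = 1) → |A x ξ - B y ξ| ≤ Kb)
    (hcond : ∀ x y (ξ : E → ℝ), (∀ z, ξ z = 0 ∨ ξ z = 1) → 0 < q x y →
      A x ξ ≠ B y ξ →
      ∃ z z' z'', 0 < q x z * q z z' ∧ 0 < q y z'' ∧
        (((ξ z = 1 ∨ ξ z' = 1) ∧ (ξ y = 0 ∨ ξ z'' = 0)) ∨
         ((ξ z = 0 ∨ ξ z' = 0) ∧ (ξ y = 1 ∨ ξ z'' = 1)))) :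
    ∃ C : ℝ, 0 < C ∧ ∀ ξ : E → ℝ, (∀ z, ξ z = 0 ∨ ξ z = 1) →
      ∑ x, ∑ y, π x * q x y * |A x ξ - B y ξ| ≤
        C * ∑ ℓ ∈ Finset.Icc 1 4, ∑ x, ∑ y, π x * (q ^ ℓ) x y * ξ x * (1 - ξ y) := by
  classical
  -- notation
  set Sf : (E → ℝ) → ℝ :=
    fun ξ => ∑ ℓ ∈ Finset.Icc 1 4, ∑ x, ∑ y, π x * (q ^ ℓ) x y * ξ x * (1 - ξ y) with hSf
  set Lf : (E → ℝ) → ℝ :=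
    fun ξ => ∑ x, ∑ y, π x * q x y * |A x ξ - B y ξ| with hLf
  have hsym : ∀ x y, 0 < q x y → 0 < q y x := by
    intro x y h
    nlinarith [hrev x y, hπpos x, hπpos y, mul_pos (hπpos x) h]
  have hq1 : ∀ a b : E, 0 < q a b → 0 < (q ^ 1) a b := fun a b h => by rwa [pow_one]
  have chain2 : ∀ a c b : E, 0 < q a c → 0 < q c b → 0 < (q ^ 2) a b := by
    intro a c b h1 h2
    have := pow_entry_pos q hqnn 1 1 a c b (hq1 _ _ h1) (hq1 _ _ h2)
    norm_num at this
    exact this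
  have chain3 : ∀ a c d b : E, 0 < q a c → 0 < q c d → 0 < q d b → 0 < (q ^ 3) a b := by
    intro a c d b h1 h2 h3
    have := pow_entry_pos q hqnn 2 1 a d b (chain2 a c d h1 h2) (hq1 _ _ h3)
    norm_num at this
    exact this
  have chain4 : ∀ a c d e b : E,
      0 < q a c → 0 < q c d → 0 < q d e → 0 < q e b → 0 < (q ^ 4) a b := by
    intro a c d e b h1 h2 h3 h4
    have := pow_entry_pos q hqnn 3 1 a e b (chain3 a c d e h1 h2 h3) (hq1 _ _ h4)
    norm_num at this
    exact this
  have term_nonneg : ∀ (ξ : E → ℝ), (∀ z, ξ z = 0 ∨ ξ z = 1) →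
      ∀ (ℓ : ℕ) (x y : E), 0 ≤ π x * (q ^ ℓ) x y * ξ x * (1 - ξ y) := by
    intro ξ hξ ℓ x y
    have h1 : 0 ≤ ξ x := by rcases hξ x with h | h <;> rw [h] <;> norm_num
    have h2 : ξ y ≤ 1 := by rcases hξ y with h | h <;> rw [h] <;> norm_num
    exact mul_nonneg (mul_nonneg (mul_nonneg (hπpos x).le (pow_nonneg_entry q hqnn ℓ x y)) h1)
      (by linarith)
  have Snonneg : ∀ (ξ : E → ℝ), (∀ z, ξ z = 0 ∨ ξ z = 1) → 0 ≤ Sf ξ := by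
    intro ξ hξ
    exact Finset.sum_nonneg fun ℓ _ => Finset.sum_nonneg fun x _ =>
      Finset.sum_nonneg fun y _ => term_nonneg ξ hξ ℓ x y
  -- key positivity lemma
  have key : ∀ (ξ : E → ℝ), (∀ z, ξ z = 0 ∨ ξ z = 1) →
      ∀ x y, 0 < q x y → A x ξ ≠ B y ξ → 0 < Sf ξ := by
    intro ξ hξ x y hxy hab
    obtain ⟨z, z', z'', hzz, hyz'', hcase⟩ := hcond x y ξ hξ hxy hab
    have hxz : 0 < q x z := by nlinarith [hqnn x z, hqnn z z']
    have hzz' : 0 < q z z' := by nlinarith [hqnn x z, hqnn z z']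
    have hzx := hsym x z hxz
    have hz'z := hsym z z' hzz'
    have hyx := hsym x y hxy
    have hz''y := hsym y z'' hyz''
    have main : ∀ (ℓ : ℕ) (a b : E), ℓ ∈ Finset.Icc 1 4 → ξ a = 1 → ξ b = 0 →
        0 < (q ^ ℓ) a b → 0 < Sf ξ := by
      intro ℓ a b hℓ ha hb hq
      have hterm : 0 < π a * (q ^ ℓ) a b * ξ a * (1 - ξ b) := by
        rw [ha, hb]
        have := hπpos a
        nlinarith
      have h1 : 0 < ∑ yy, π a * (q ^ ℓ) a yy * ξ a * (1 - ξ yy) :=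
        Finset.sum_pos' (fun yy _ => term_nonneg ξ hξ ℓ a yy) ⟨b, Finset.mem_univ b, hterm⟩
      have hW : 0 < ∑ xx, ∑ yy, π xx * (q ^ ℓ) xx yy * ξ xx * (1 - ξ yy) :=
        Finset.sum_pos'
          (fun xx _ => Finset.sum_nonneg fun yy _ => term_nonneg ξ hξ ℓ xx yy)
          ⟨a, Finset.mem_univ a, h1⟩
      refine lt_of_lt_of_le hW ?_
      exact Finset.single_le_sum
        (f := fun ℓ' => ∑ xx, ∑ yy, π xx * (q ^ ℓ') xx yy * ξ xx * (1 - ξ yy))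
        (fun ℓ' _ => Finset.sum_nonneg fun xx _ =>
          Finset.sum_nonneg fun yy _ => term_nonneg ξ hξ ℓ' xx yy) hℓ
    rcases hcase with ⟨h1, h2⟩ | ⟨h1, h2⟩
    · rcases h1 with hz | hz'
      · rcases h2 with hy | hz''
        · exact main 2 z y (by decide) hz hy (chain2 z x y hzx hxy)
        · exact main 3 z z'' (by decide) hz hz'' (chain3 z x y z'' hzx hxy hyz'')
      · rcases h2 with hy | hz''
        · exact main 3 z' y (by decide) hz' hy (chain3 z' z x y hz'z hzx hxy)
        · exact main 4 z' z'' (by decide) hz' hz'' (chain4 z' z x y z'' hz'z hzx hxy hyz'')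
    · rcases h2 with hy | hz''
      · rcases h1 with hz | hz'
        · exact main 2 y z (by decide) hy hz (chain2 y x z hyx hxz)
        · exact main 3 y z' (by decide) hy hz' (chain3 y x z z' hyx hxz hzz')
      · rcases h1 with hz | hz'
        · exact main 3 z'' z (by decide) hz'' hz (chain3 z'' y x z hz''y hyx hxz)
        · exact main 4 z'' z' (by decide) hz'' hz' (chain4 z'' y x z z' hz''y hyx hxz hzz')
  -- if S = 0 then L = 0
  have Lzero : ∀ (ξ : E → ℝ), (∀ z, ξ z = 0 ∨ ξ z = 1) → ¬ (0 < Sf ξ) → Lf ξ = 0 := by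
    intro ξ hξ hS
    refine Finset.sum_eq_zero fun x _ => Finset.sum_eq_zero fun y _ => ?_
    rcases (hqnn x y).lt_or_eq with h | h
    · by_cases hab : A x ξ = B y ξ
      · rw [hab]; simp
      · exact absurd (key ξ hξ x y h hab) hS
    · rw [← h]; ring
  -- the configuration coding
  set f : (E → Bool) → (E → ℝ) := fun b x => if b x then 1 else 0 with hf
  have fval : ∀ b : E → Bool, ∀ z, f b z = 0 ∨ f b z = 1 := by
    intro b z
    by_cases h : b z <;> simp [hf, h]
  set C0 : (E → Bool) → ℝ :=
    fun b => if 0 < Sf (f b) then max 1 (Lf (f b) / Sf (f b)) else 1 with hC0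
  have hC0ge1 : ∀ b, (1 : ℝ) ≤ C0 b := by
    intro b
    rw [hC0]
    dsimp only
    split
    · exact le_max_left _ _
    · exact le_refl 1
  have hC0bound : ∀ b : E → Bool, Lf (f b) ≤ C0 b * Sf (f b) := by
    intro b
    rw [hC0]
    dsimp only
    by_cases hS : 0 < Sf (f b)
    · rw [if_pos hS]
      calc Lf (f b) = Lf (f b) / Sf (f b) * Sf (f b) := (div_mul_cancel₀ _ hS.ne').symm
        _ ≤ max 1 (Lf (f b) / Sf (f b)) * Sf (f b) :=
          mul_le_mul_of_nonneg_right (le_max_right _ _) hS.le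
    · rw [if_neg hS, Lzero (f b) (fval b) hS]
      have hS0 : Sf (f b) = 0 := le_antisymm (not_lt.mp hS) (Snonneg (f b) (fval b))
      rw [hS0]
      norm_num
  have hne : (Finset.univ : Finset (E → Bool)).Nonempty := Finset.univ_nonempty
  refine ⟨Finset.univ.sup' hne C0, ?_, ?_⟩
  · exact lt_of_lt_of_le one_pos
      (le_trans (hC0ge1 (fun _ => true)) (Finset.le_sup' C0 (Finset.mem_univ _)))
  · intro ξ hξ
    set b : E → Bool := fun x => if ξ x = 1 then true else false with hb
    have hfb : f b = ξ := by
      funext x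
      by_cases h : ξ x = 1
      · simp [hf, hb, h]
      · have h0 : ξ x = 0 := (hξ x).resolve_right h
        simp [hf, hb, h, h0]
    have h1 : Lf ξ ≤ C0 b * Sf ξ := by rw [← hfb]; exact hC0bound b
    have h2 : C0 b ≤ Finset.univ.sup' hne C0 := Finset.le_sup' C0 (Finset.mem_univ b)
    calc Lf ξ ≤ C0 b * Sf ξ := h1
      _ ≤ Finset.univ.sup' hne C0 * Sf ξ :=
        mul_le_mul_of_nonneg_right h2 (Snonneg ξ hξ)
end

section
/- Let (X_ℓ) be a stationary reversible discrete-time Markov chain on a finite set E with kernel q and stationary initial law π, and let M_{x,y} denote the expected first meeting time of two independent rate-1 continuous-time q-chains started at x and y. Then for all ℓ ≥ 1, E_π[M_{X_0, X_ℓ}] ≤ E_π[M_{X_0, X_{ℓ-1}}] + E_π[M_{X_0, X_1}]; in particular E_π[M_{X_0, X_ℓ}] ≤ ℓ · E_π[M_{X_0, X_1}]. -/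
open Finset

/-- with `(X_ℓ)` the stationary discrete-time `q`-chain (so that
`E_π[M_{X_0,X_ℓ}] = ∑_{x,y} π(x) qℓ(x,y) m(x,y)` with `qℓ` the `ℓ`-th matrix power),
the expected meeting times satisfy the subadditivity
`E_π[M_{X_0,X_ℓ}] ≤ E_π[M_{X_0,X_{ℓ-1}}] + E_π[M_{X_0,X_1}]`, and in particular
`E_π[M_{X_0,X_ℓ}] ≤ ℓ · E_π[M_{X_0,X_1}]`. -/
theorem stmt5 {E : Type*} [Fintype E] [DecidableEq E]
    (q : Matrix E E ℝ) (π : E → ℝ) (m : E → E → ℝ)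
    (hqnn : ∀ x y, 0 ≤ q x y) (hq0 : ∀ x, q x x = 0)
    (hrow : ∀ x, ∑ y, q x y = 1)
    (hirr : ∀ x y, ∃ n, 0 < n ∧ 0 < (q ^ n) x y)
    (hrev : ∀ x y, π x * q x y = π y * q y x)
    (hπnn : ∀ x, 0 ≤ π x) (hπ1 : ∑ x, π x = 1)
    (hm0 : ∀ x, m x x = 0) (hmsym : ∀ x y, m x y = m y x)
    (hmnn : ∀ x y, 0 ≤ m x y)
    (hmeq : ∀ x y, x ≠ y →
      m x y = 1 / 2 + (1 / 2) * ∑ z, q x z * m z y + (1 / 2) * ∑ z, q y z * m x z) :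
    ∀ ℓ : ℕ, 1 ≤ ℓ →
      ((∑ x, ∑ y, π x * (q ^ ℓ) x y * m x y) ≤
        (∑ x, ∑ y, π x * (q ^ (ℓ - 1)) x y * m x y) +
          ∑ x, ∑ y, π x * (q ^ 1) x y * m x y) ∧
      (∑ x, ∑ y, π x * (q ^ ℓ) x y * m x y) ≤
        (ℓ : ℝ) * ∑ x, ∑ y, π x * (q ^ 1) x y * m x y := by
  -- basic facts about powers of q
  have hpownn : ∀ n : ℕ, ∀ x y : E, 0 ≤ (q ^ n) x y := by
    intro n
    induction n with
    | zero =>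
      intro x y
      rw [pow_zero, Matrix.one_apply]
      split <;> norm_num
    | succ n ih =>
      intro x y
      rw [pow_succ, Matrix.mul_apply]
      exact Finset.sum_nonneg fun z _ => mul_nonneg (ih x z) (hqnn z y)
  have hpowrow : ∀ n : ℕ, ∀ x : E, ∑ y, (q ^ n) x y = 1 := by
    intro n
    induction n with
    | zero =>
      intro x
      simp [Matrix.one_apply]
    | succ n ih =>
      intro x
      calc ∑ y, (q ^ (n + 1)) x y = ∑ y, ∑ z, (q ^ n) x z * q z y := by
            simp [pow_succ, Matrix.mul_apply]
        _ = ∑ z, ∑ y, (q ^ n) x z * q z y := Finset.sum_comm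
        _ = ∑ z, (q ^ n) x z * ∑ y, q z y :=
            Finset.sum_congr rfl fun z _ => (Finset.mul_sum _ _ _).symm
        _ = ∑ z, (q ^ n) x z := by
            refine Finset.sum_congr rfl fun z _ => ?_
            rw [hrow z, mul_one]
        _ = 1 := ih x
  have hpowle1 : ∀ n : ℕ, ∀ x y : E, (q ^ n) x y ≤ 1 := by
    intro n x y
    calc (q ^ n) x y ≤ ∑ z, (q ^ n) x z :=
          Finset.single_le_sum (fun z _ => hpownn n x z) (Finset.mem_univ y)
      _ = 1 := hpowrow n x
  have hrevn : ∀ n : ℕ, ∀ x y : E, π x * (q ^ n) x y = π y * (q ^ n) y x := by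
    intro n
    induction n with
    | zero =>
      intro x y
      rw [pow_zero, Matrix.one_apply, Matrix.one_apply]
      by_cases h : x = y
      · subst h; rfl
      · rw [if_neg h, if_neg fun h' => h h'.symm, mul_zero, mul_zero]
    | succ n ih =>
      intro x y
      calc π x * (q ^ (n + 1)) x y = ∑ z, (π x * (q ^ n) x z) * q z y := by
            rw [pow_succ, Matrix.mul_apply, Finset.mul_sum]
            exact Finset.sum_congr rfl fun z _ => by ring
        _ = ∑ z, (π z * (q ^ n) z x) * q z y :=
            Finset.sum_congr rfl fun z _ => by rw [ih x z]
        _ = ∑ z, (π z * q z y) * (q ^ n) z x :=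
            Finset.sum_congr rfl fun z _ => by ring
        _ = ∑ z, (π y * q y z) * (q ^ n) z x :=
            Finset.sum_congr rfl fun z _ => by rw [hrev z y]
        _ = π y * (q ^ (n + 1)) y x := by
            rw [pow_succ', Matrix.mul_apply, Finset.mul_sum]
            exact Finset.sum_congr rfl fun z _ => by ring
  -- the key recursion
  have key : ∀ n : ℕ,
      2 * (∑ x, ∑ y, π x * (q ^ (n + 1)) x y * m x y)
        = 2 * (∑ x, ∑ y, π x * (q ^ n) x y * m x y) - 1
          + 2 * ∑ z, π z * (q ^ n) z z * (1 / 2 + ∑ w, q z w * m z w) := by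
    intro n
    have c1 : (∑ x, ∑ y, π x * (q ^ (n + 1)) x y * m x y)
        = ∑ z, ∑ y, π z * (q ^ n) z y * (∑ x, q z x * m x y) := by
      calc ∑ x, ∑ y, π x * (q ^ (n + 1)) x y * m x y
          = ∑ x, ∑ y, ∑ z, (π x * q x z) * ((q ^ n) z y * m x y) := by
            refine Finset.sum_congr rfl fun x _ => Finset.sum_congr rfl fun y _ => ?_
            rw [pow_succ', Matrix.mul_apply, Finset.mul_sum, Finset.sum_mul]
            exact Finset.sum_congr rfl fun z _ => by ring
        _ = ∑ x, ∑ y, ∑ z, (π z * q z x) * ((q ^ n) z y * m x y) := by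
            refine Finset.sum_congr rfl fun x _ => Finset.sum_congr rfl fun y _ =>
              Finset.sum_congr rfl fun z _ => ?_
            rw [hrev x z]
        _ = ∑ x, ∑ z, ∑ y, (π z * q z x) * ((q ^ n) z y * m x y) :=
            Finset.sum_congr rfl fun x _ => Finset.sum_comm
        _ = ∑ z, ∑ x, ∑ y, (π z * q z x) * ((q ^ n) z y * m x y) := Finset.sum_comm
        _ = ∑ z, ∑ y, ∑ x, (π z * q z x) * ((q ^ n) z y * m x y) :=
            Finset.sum_congr rfl fun z _ => Finset.sum_comm
        _ = ∑ z, ∑ y, π z * (q ^ n) z y * (∑ x, q z x * m x y) := by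
            refine Finset.sum_congr rfl fun z _ => Finset.sum_congr rfl fun y _ => ?_
            rw [Finset.mul_sum]
            exact Finset.sum_congr rfl fun x _ => by ring
    have c2 : (∑ z, ∑ y, π z * (q ^ n) z y * (∑ x, q z x * m x y))
        = ∑ z, ∑ y, π z * (q ^ n) z y * (∑ x, q y x * m x z) := by
      rw [Finset.sum_comm]
      exact Finset.sum_congr rfl fun a _ => Finset.sum_congr rfl fun b _ => by
        rw [hrevn n b a]
    have c3 : 2 * (∑ x, ∑ y, π x * (q ^ (n + 1)) x y * m x y)
        = ∑ z, ∑ y, π z * (q ^ n) z y *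
            ((∑ x, q z x * m x y) + (∑ x, q y x * m x z)) := by
      rw [two_mul, c1]
      nth_rewrite 2 [c2]
      rw [← Finset.sum_add_distrib]
      refine Finset.sum_congr rfl fun z _ => ?_
      rw [← Finset.sum_add_distrib]
      exact Finset.sum_congr rfl fun y _ => (mul_add _ _ _).symm
    have c4 : ∀ z : E,
        (∑ y, π z * (q ^ n) z y * ((∑ x, q z x * m x y) + (∑ x, q y x * m x z)))
          = (∑ y, π z * (q ^ n) z y * (2 * m z y - 1))
            + 2 * (π z * (q ^ n) z z * (1 / 2 + ∑ w, q z w * m z w)) := by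
      intro z
      have hf := Finset.sum_erase_add Finset.univ
        (fun y => π z * (q ^ n) z y * ((∑ x, q z x * m x y) + (∑ x, q y x * m x z)))
        (Finset.mem_univ z)
      have hg := Finset.sum_erase_add Finset.univ
        (fun y => π z * (q ^ n) z y * (2 * m z y - 1)) (Finset.mem_univ z)
      have he : (∑ y ∈ Finset.univ.erase z,
            π z * (q ^ n) z y * ((∑ x, q z x * m x y) + (∑ x, q y x * m x z)))
          = ∑ y ∈ Finset.univ.erase z, π z * (q ^ n) z y * (2 * m z y - 1) := by
        refine Finset.sum_congr rfl fun y hy => ?_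
        have hyz : y ≠ z := Finset.ne_of_mem_erase hy
        have h1 := hmeq z y fun h => hyz h.symm
        have h2 : (∑ x, q y x * m x z) = ∑ x, q y x * m z x :=
          Finset.sum_congr rfl fun x _ => by rw [hmsym]
        rw [h2]
        have : (∑ x, q z x * m x y) + (∑ x, q y x * m z x) = 2 * m z y - 1 := by
          linarith [h1]
        rw [this]
      have hdiag : π z * (q ^ n) z z * ((∑ x, q z x * m x z) + (∑ x, q z x * m x z))
          = π z * (q ^ n) z z * (2 * m z z - 1)
            + 2 * (π z * (q ^ n) z z * (1 / 2 + ∑ w, q z w * m z w)) := by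
        have hS : (∑ x, q z x * m x z) = ∑ w, q z w * m z w :=
          Finset.sum_congr rfl fun x _ => by rw [hmsym]
        rw [hS, hm0 z]
        ring
      linarith [hf, hg, he, hdiag]
    have c5 : (∑ z, ∑ y, π z * (q ^ n) z y * (2 * m z y - 1))
        = 2 * (∑ x, ∑ y, π x * (q ^ n) x y * m x y) - 1 := by
      have hz : ∀ z : E, (∑ y, π z * (q ^ n) z y * (2 * m z y - 1))
          = 2 * (∑ y, π z * (q ^ n) z y * m z y) - π z := by
        intro z
        have h1 : (∑ y, π z * (q ^ n) z y * (2 * m z y - 1))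
            = ∑ y, (2 * (π z * (q ^ n) z y * m z y) - π z * (q ^ n) z y) :=
          Finset.sum_congr rfl fun y _ => by ring
        rw [h1, Finset.sum_sub_distrib, ← Finset.mul_sum, ← Finset.mul_sum,
          hpowrow n z, mul_one]
      calc (∑ z, ∑ y, π z * (q ^ n) z y * (2 * m z y - 1))
          = ∑ z, (2 * (∑ y, π z * (q ^ n) z y * m z y) - π z) :=
            Finset.sum_congr rfl fun z _ => hz z
        _ = 2 * (∑ x, ∑ y, π x * (q ^ n) x y * m x y) - 1 := by
            rw [Finset.sum_sub_distrib, ← Finset.mul_sum, hπ1]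
    calc 2 * (∑ x, ∑ y, π x * (q ^ (n + 1)) x y * m x y)
        = ∑ z, ∑ y, π z * (q ^ n) z y *
            ((∑ x, q z x * m x y) + (∑ x, q y x * m x z)) := c3
      _ = ∑ z, ((∑ y, π z * (q ^ n) z y * (2 * m z y - 1))
            + 2 * (π z * (q ^ n) z z * (1 / 2 + ∑ w, q z w * m z w))) :=
          Finset.sum_congr rfl fun z _ => c4 z
      _ = (∑ z, ∑ y, π z * (q ^ n) z y * (2 * m z y - 1))
            + ∑ z, 2 * (π z * (q ^ n) z z * (1 / 2 + ∑ w, q z w * m z w)) :=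
          Finset.sum_add_distrib
      _ = 2 * (∑ x, ∑ y, π x * (q ^ n) x y * m x y) - 1
          + 2 * ∑ z, π z * (q ^ n) z z * (1 / 2 + ∑ w, q z w * m z w) := by
          rw [c5, ← Finset.mul_sum]
  -- F 0 = 0
  have hF0 : (∑ x, ∑ y, π x * (q ^ 0) x y * m x y) = 0 := by
    refine Finset.sum_eq_zero fun x _ => Finset.sum_eq_zero fun y _ => ?_
    by_cases h : x = y
    · subst h
      rw [hm0 x, mul_zero]
    · rw [pow_zero, Matrix.one_apply_ne h, mul_zero, zero_mul]
  -- r n ≤ r 0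
  have hr_le : ∀ n : ℕ,
      (∑ z, π z * (q ^ n) z z * (1 / 2 + ∑ w, q z w * m z w))
        ≤ ∑ z, π z * (q ^ 0) z z * (1 / 2 + ∑ w, q z w * m z w) := by
    intro n
    refine Finset.sum_le_sum fun z _ => ?_
    have hd : (0 : ℝ) ≤ 1 / 2 + ∑ w, q z w * m z w :=
      add_nonneg (by norm_num)
        (Finset.sum_nonneg fun w _ => mul_nonneg (hqnn z w) (hmnn z w))
    have h00 : (q ^ 0 : Matrix E E ℝ) z z = 1 := by rw [pow_zero, Matrix.one_apply_eq]
    rw [h00]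
    nlinarith [mul_nonneg (mul_nonneg (hπnn z) hd) (sub_nonneg.mpr (hpowle1 n z z)),
      hπnn z, hd, hpownn n z z]
  -- F 1 in terms of r 0
  have hF1 : (∑ x, ∑ y, π x * (q ^ 1) x y * m x y)
      = (∑ z, π z * (q ^ 0) z z * (1 / 2 + ∑ w, q z w * m z w)) - 1 / 2 := by
    have k0 := key 0
    rw [zero_add] at k0
    rw [hF0] at k0
    linarith
  -- subadditivity step
  have hstep : ∀ k : ℕ,
      (∑ x, ∑ y, π x * (q ^ (k + 1)) x y * m x y)
        ≤ (∑ x, ∑ y, π x * (q ^ k) x y * m x y)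
          + ∑ x, ∑ y, π x * (q ^ 1) x y * m x y := by
    intro k
    have hk := key k
    have hr := hr_le k
    linarith
  -- linear bound
  have hlin : ∀ k : ℕ,
      (∑ x, ∑ y, π x * (q ^ (k + 1)) x y * m x y)
        ≤ ((k : ℝ) + 1) * ∑ x, ∑ y, π x * (q ^ 1) x y * m x y := by
    intro k
    induction k with
    | zero => simp
    | succ k ih =>
      have h := hstep (k + 1)
      push_cast
      push_cast at ih
      linarith
  intro ℓ hℓ
  obtain ⟨k, rfl⟩ : ∃ k, ℓ = k + 1 := ⟨ℓ - 1, (Nat.succ_pred_eq_of_pos hℓ).symm⟩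
  constructor
  · simpa [Nat.add_sub_cancel] using hstep k
  · have h := hlin k
    push_cast
    push_cast at h
    linarith
end

section
/- Let G be a finite connected graph, let g(G) be the spectral gap of the (discrete) random walk on G, and let M_{x,y} be the first meeting time of two independent rate-1 random walks on G started at x and y. Then max_{x,y} E[M_{x,y}] ≤ max_{y} (2 ∑_{x ≠ y} deg(x)) / (g(G) deg(y)). -/
open Finset

variable {V : Type*} [Fintype V] [DecidableEq V]

/-- The (real-valued) degree of a vertex. -/
noncomputable def deg (G : SimpleGraph V) [DecidableRel G.Adj] (x : V) : ℝ :=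
  (G.degree x : ℝ)

/-- The simple random walk kernel `q(x,y) = 1/deg(x)` for `y` adjacent to `x`. -/
noncomputable def rwKernel (G : SimpleGraph V) [DecidableRel G.Adj] (x y : V) : ℝ :=
  if G.Adj x y then 1 / deg G x else 0

/-- The stationary distribution `π(x) = deg(x)/∑_z deg(z)` of the random walk. -/
noncomputable def statDist (G : SimpleGraph V) [DecidableRel G.Adj] (x : V) : ℝ :=
  deg G x / ∑ z, deg G z

/-- The Dirichlet form `E(f,f) = (1/2)∑_{x,y} π(x)q(x,y)(f(x)-f(y))²`. -/
noncomputable def dirichletForm (G : SimpleGraph V) [DecidableRel G.Adj] (f : V → ℝ) : ℝ :=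
  (1 / 2) * ∑ x, ∑ y, statDist G x * rwKernel G x y * (f x - f y) ^ 2

/-- The variance `Var_π(f) = ∑_x π(x)(f(x) - π(f))²`. -/
noncomputable def piVar (G : SimpleGraph V) [DecidableRel G.Adj] (f : V → ℝ) : ℝ :=
  ∑ x, statDist G x * (f x - ∑ z, statDist G z * f z) ^ 2

/-- The spectral gap `g(G) = 1 - λ₂`, via its Rayleigh-quotient characterization
`g(G) = inf { E(f,f)/Var_π(f) : Var_π(f) ≠ 0 }`. -/
noncomputable def specGap (G : SimpleGraph V) [DecidableRel G.Adj] : ℝ :=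
  sInf {r : ℝ | ∃ f : V → ℝ, piVar G f ≠ 0 ∧ r = dirichletForm G f / piVar G f}



set_option linter.unusedSectionVars false
set_option linter.unusedVariables false
set_option maxHeartbeats 1000000

namespace Stmt6

variable (G : SimpleGraph V) [DecidableRel G.Adj]

lemma deg_nonneg (x : V) : 0 ≤ deg G x := Nat.cast_nonneg _

lemma rw_nonneg (x z : V) : 0 ≤ rwKernel G x z := by
  unfold rwKernel
  split
  · exact div_nonneg zero_le_one (deg_nonneg G x)
  · exact le_refl 0

lemma deg_pos_of_adj {x z : V} (h : G.Adj x z) : 0 < deg G x := by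
  unfold deg
  exact_mod_cast (G.degree_pos_iff_exists_adj x).2 ⟨z, h⟩

lemma rw_pos_of_adj {x z : V} (h : G.Adj x z) : 0 < rwKernel G x z := by
  unfold rwKernel
  rw [if_pos h]
  exact one_div_pos.2 (deg_pos_of_adj G h)

lemma rw_rowsum {x : V} (hx : 0 < deg G x) : ∑ z, rwKernel G x z = 1 := by
  unfold rwKernel
  rw [Finset.sum_ite, Finset.sum_const_zero, add_zero, Finset.sum_const, nsmul_eq_mul]
  rw [← SimpleGraph.neighborFinset_eq_filter, SimpleGraph.card_neighborFinset_eq_degree]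
  have : deg G x ≠ 0 := ne_of_gt hx
  unfold deg at this ⊢
  field_simp

lemma statDist_nonneg (x : V) : 0 ≤ statDist G x :=
  div_nonneg (deg_nonneg G x) (Finset.sum_nonneg fun z _ => deg_nonneg G z)

lemma pi_rw_sym (x z : V) : statDist G x * rwKernel G x z = statDist G z * rwKernel G z x := by
  unfold statDist rwKernel
  by_cases h : G.Adj x z
  · rw [if_pos h, if_pos h.symm]
    have hx : deg G x ≠ 0 := ne_of_gt (deg_pos_of_adj G h)
    have hz : deg G z ≠ 0 := ne_of_gt (deg_pos_of_adj G h.symm)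
    rw [div_mul_div_comm, div_mul_div_comm, mul_one, mul_one]
    rw [mul_comm (∑ w, deg G w) (deg G x), mul_comm (∑ w, deg G w) (deg G z)]
    rw [← div_div, ← div_div, div_self hx, div_self hz]
  · rw [if_neg h, if_neg fun hh => h hh.symm, mul_zero, mul_zero]

/-- If a weighted average (weights summing to whatever) is at least `m` while every value is
at most `m`, each value with positive weight equals `m`. -/
lemma eq_of_avg_ge {α : Type*} (s : Finset α) (w f : α → ℝ) (m : ℝ)
    (hw : ∀ i ∈ s, 0 ≤ w i) (hf : ∀ i ∈ s, f i ≤ m)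
    (hge : (∑ i ∈ s, w i) * m ≤ ∑ i ∈ s, w i * f i)
    {i₀ : α} (hi₀ : i₀ ∈ s) (hwi : 0 < w i₀) : f i₀ = m := by
  have h1 : ∀ i ∈ s, w i * f i ≤ w i * m := fun i hi =>
    mul_le_mul_of_nonneg_left (hf i hi) (hw i hi)
  have h2 : ∑ i ∈ s, w i * f i = ∑ i ∈ s, w i * m :=
    le_antisymm (Finset.sum_le_sum h1) (by rw [← Finset.sum_mul]; exact hge)
  have h3 : ∑ i ∈ s, (w i * m - w i * f i) = 0 := by
    rw [Finset.sum_sub_distrib, h2, sub_self]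
  have h4 := (Finset.sum_eq_zero_iff_of_nonneg fun i hi => sub_nonneg.2 (h1 i hi)).1 h3 i₀ hi₀
  nlinarith [h4, hwi]


/-- Minimum principle: a function superharmonic off `B` and nonnegative on `B` is nonnegative. -/
lemma minprin [Nonempty V] (hconn : G.Connected) (hd : ∀ x, 0 < deg G x)
    (B : V → Prop) (b₀ : V) (hb₀ : B b₀) (ψ : V → ℝ)
    (hsup : ∀ x, ¬ B x → ∑ z, rwKernel G x z * ψ z ≤ ψ x)
    (hbd : ∀ b, B b → 0 ≤ ψ b) : ∀ x, 0 ≤ ψ x := by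
  classical
  obtain ⟨x₀, -, hx₀⟩ := Finset.exists_mem_eq_inf' (univ_nonempty (α := V)) ψ
  set m := univ.inf' univ_nonempty ψ with hm
  suffices h : 0 ≤ m by
    intro x; exact le_trans h (Finset.inf'_le _ (mem_univ x))
  have key : ∀ (x b : V) (p : G.Walk x b), B b → ψ x = m → 0 ≤ m := by
    intro x b p
    induction p with
    | nil =>
      intro hb hx; rw [← hx]; exact hbd _ hb
    | @cons u v w huv p ih =>
      intro hb hu
      by_cases hBu : B u
      · rw [← hu]; exact hbd _ hBu
      · have h1 : ∑ z, rwKernel G u z * ψ z ≤ ψ u := hsup u hBu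
        have hψv : ψ v = m := by
          have hneg : (-ψ) v = -m := by
            apply eq_of_avg_ge univ (rwKernel G u) (-ψ) (-m)
              (fun i _ => rw_nonneg G u i)
              (fun i _ => by
                simp only [Pi.neg_apply, neg_le_neg_iff]
                exact Finset.inf'_le _ (mem_univ i))
              ?_ (mem_univ v) (rw_pos_of_adj G huv)
            rw [rw_rowsum G (hd u), one_mul]
            have hh : ∑ z, rwKernel G u z * (-ψ) z = -(∑ z, rwKernel G u z * ψ z) := by
              simp only [Pi.neg_apply, mul_neg]
              exact Finset.sum_neg_distrib _
            rw [hh]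
            rw [hu] at h1
            linarith
          simpa using congrArg Neg.neg hneg
        exact ih hb hψv
  obtain ⟨p⟩ := hconn x₀ b₀
  exact key x₀ b₀ p hb₀ hx₀.symm

/-- Comparison/maximum principle for the product walk. -/
lemma compare [Nonempty V] (hconn : G.Connected) (hd : ∀ x, 0 < deg G x)
    (D : V → V → ℝ)
    (hdiag : ∀ x, D x x ≤ 0)
    (hstep : ∀ x y, x ≠ y → D x y ≤ (1/2) * ∑ z, rwKernel G x z * D z y
        + (1/2) * ∑ z, rwKernel G y z * D x z) :
    ∀ x y, D x y ≤ 0 := by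
  classical
  have hne : (univ : Finset (V × V)).Nonempty := univ_nonempty
  obtain ⟨⟨x₀, y₀⟩, -, hxy⟩ := Finset.exists_mem_eq_sup' hne (fun p => D p.1 p.2)
  set m := univ.sup' hne (fun p : V × V => D p.1 p.2) with hm
  have hle : ∀ x y, D x y ≤ m := fun x y => by
    rw [hm]
    exact Finset.le_sup' (fun p : V × V => D p.1 p.2) (mem_univ (x, y))
  suffices h : m ≤ 0 by
    intro x y; exact le_trans (hle x y) h
  have key : ∀ (x y : V) (_ : G.Walk x y), D x y = m → m ≤ 0 := by
    intro x y p
    induction p with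
    | nil =>
      intro hx
      rw [← hx]
      apply hdiag
    | @cons u v w huv p ih =>
      intro hu
      by_cases huw : u = w
      · rw [← hu, huw]; exact hdiag w
      · have h1 := hstep u w huw
        have hA : ∑ z, rwKernel G u z * D z w ≤ m := by
          calc ∑ z, rwKernel G u z * D z w ≤ ∑ z, rwKernel G u z * m :=
                Finset.sum_le_sum fun z _ =>
                  mul_le_mul_of_nonneg_left (hle z w) (rw_nonneg G u z)
            _ = 1 * m := by rw [← Finset.sum_mul, rw_rowsum G (hd u)]
            _ = m := one_mul m
        have hB : ∑ z, rwKernel G w z * D u z ≤ m := by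
          calc ∑ z, rwKernel G w z * D u z ≤ ∑ z, rwKernel G w z * m :=
                Finset.sum_le_sum fun z _ =>
                  mul_le_mul_of_nonneg_left (hle u z) (rw_nonneg G w z)
            _ = 1 * m := by rw [← Finset.sum_mul, rw_rowsum G (hd w)]
            _ = m := one_mul m
        have hAge : (∑ z, rwKernel G u z) * m ≤ ∑ z, rwKernel G u z * D z w := by
          rw [rw_rowsum G (hd u), one_mul]
          rw [hu] at h1
          linarith
        have hDv : D v w = m :=
          eq_of_avg_ge univ (rwKernel G u) (fun z => D z w) m
            (fun i _ => rw_nonneg G u i) (fun i _ => hle i w) hAge (mem_univ v)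
            (rw_pos_of_adj G huv)
        exact ih hDv
  obtain ⟨p⟩ := hconn x₀ y₀
  exact key x₀ y₀ p hxy.symm


/-- Sum over the subtype `{z // z ≠ y}` equals the full sum when `f y = 0`. -/
lemma sum_subtype_ne (y : V) (f : V → ℝ) (hfy : f y = 0) :
    ∑ j : {z : V // z ≠ y}, f j.1 = ∑ z, f z := by
  classical
  rw [← Finset.sum_erase_add (univ : Finset V) f (mem_univ y), hfy, add_zero]
  rw [Finset.sum_subtype (p := fun z => z ≠ y) (univ.erase y) (fun z => by simp) f]

lemma exists_hitting [Nonempty V] (hconn : G.Connected) (hd : ∀ x, 0 < deg G x) (y : V) :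
    ∃ h : V → ℝ, h y = 0 ∧ (∀ x, x ≠ y → h x = 1 + ∑ z, rwKernel G x z * h z) ∧
      (∀ x, 0 ≤ h x) := by
  classical
  set S := {z : V // z ≠ y}
  set A : Matrix S S ℝ := fun i j => (if i = j then (1:ℝ) else 0) - rwKernel G i.1 j.1 with hA
  -- extension of a vector on S by 0 at y
  have ext0 : ∀ v : S → ℝ, ∃ vt : V → ℝ, vt y = 0 ∧ ∀ j : S, vt j.1 = v j := by
    intro v
    refine ⟨fun z => if hz : z = y then 0 else v ⟨z, hz⟩, by simp, fun j => ?_⟩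
    simp [j.2]
  have mulVec_eq : ∀ (v : S → ℝ) (vt : V → ℝ), vt y = 0 → (∀ j : S, vt j.1 = v j) →
      ∀ i : S, A.mulVec v i = vt i.1 - ∑ z, rwKernel G i.1 z * vt z := by
    intro v vt h0 hj i
    have : A.mulVec v i = ∑ j : S, ((if i = j then (1:ℝ) else 0) - rwKernel G i.1 j.1) * v j := by
      simp [Matrix.mulVec, dotProduct, hA]
    rw [this]
    have h1 : ∑ j : S, ((if i = j then (1:ℝ) else 0) - rwKernel G i.1 j.1) * v j
        = ∑ j : S, ((if i = j then (1:ℝ) else 0) * v j) - ∑ j : S, rwKernel G i.1 j.1 * v j := by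
      rw [← Finset.sum_sub_distrib]
      exact Finset.sum_congr rfl fun j _ => by ring
    have h2 : ∑ j : S, (if i = j then (1:ℝ) else 0) * v j = v i := by
      simp [ite_mul]
      rw [Finset.sum_eq_single i (fun b _ hb => if_neg (Ne.symm hb)) (fun h => absurd (mem_univ i) h), if_pos rfl]
    rw [h1, h2]
    congr 1
    · exact (hj i).symm
    · rw [← sum_subtype_ne y (fun z => rwKernel G i.1 z * vt z) (by simp [h0])]
      exact Finset.sum_congr rfl fun j _ => by rw [hj j]
  -- injectivity
  have hinj : Function.Injective A.mulVecLin := by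
    rw [injective_iff_map_eq_zero]
    intro v hv
    obtain ⟨vt, h0, hj⟩ := ext0 v
    have hvt : ∀ i : S, vt i.1 = ∑ z, rwKernel G i.1 z * vt z := by
      intro i
      have := mulVec_eq v vt h0 hj i
      have hzero : A.mulVec v i = 0 := by rw [show A.mulVec v = 0 from hv]; rfl
      rw [hzero] at this
      linarith [this]
    have hvt' : ∀ x : V, x ≠ y → vt x = ∑ z, rwKernel G x z * vt z := fun x hx => hvt ⟨x, hx⟩
    have hpos : ∀ x, 0 ≤ vt x :=
      minprin G hconn hd (fun b => b = y) y rfl vt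
        (fun x hx => le_of_eq (hvt' x hx).symm) (fun b hb => by rw [hb, h0])
    have hneg : ∀ x, 0 ≤ -vt x := by
      apply minprin G hconn hd (fun b => b = y) y rfl (fun x => -vt x)
      · intro x hx
        have : ∑ z, rwKernel G x z * -vt z = -(∑ z, rwKernel G x z * vt z) := by
          simp only [mul_neg]
          exact Finset.sum_neg_distrib _
        rw [this, ← hvt' x hx]
      · intro b hb; rw [hb, h0]; simp
    have : ∀ x, vt x = 0 := fun x => le_antisymm (by linarith [hneg x]) (hpos x)
    funext j
    rw [show v j = vt j.1 from (hj j).symm, this]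
    rfl
  have hsurj : Function.Surjective A.mulVecLin := by
    exact LinearMap.injective_iff_surjective.1 hinj
  obtain ⟨w, hw⟩ := hsurj (fun _ => (1:ℝ))
  obtain ⟨h, h0, hj⟩ := ext0 w
  have heq : ∀ x : V, x ≠ y → h x = 1 + ∑ z, rwKernel G x z * h z := by
    intro x hx
    have := mulVec_eq w h h0 hj ⟨x, hx⟩
    have h1 : A.mulVec w ⟨x, hx⟩ = 1 := by
      rw [show A.mulVec w = fun _ => (1:ℝ) from hw]
    rw [h1] at this
    linarith [this]
  refine ⟨h, h0, heq, ?_⟩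
  apply minprin G hconn hd (fun b => b = y) y rfl h
  · intro x hx
    rw [heq x hx]; linarith
  · intro b hb; rw [hb, h0]
  

lemma cross_eq (f g : V → ℝ) :
    ∑ x, statDist G x * f x * (∑ z, rwKernel G x z * g z)
      = ∑ x, ∑ z, statDist G x * rwKernel G x z * (f x * g z) := by
  refine Finset.sum_congr rfl fun x _ => ?_
  rw [Finset.mul_sum]
  exact Finset.sum_congr rfl fun z _ => by ring

lemma selfadj (f g : V → ℝ) :
    ∑ x, statDist G x * f x * (∑ z, rwKernel G x z * g z)
      = ∑ x, statDist G x * g x * (∑ z, rwKernel G x z * f z) := by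
  rw [cross_eq, cross_eq, Finset.sum_comm]
  refine Finset.sum_congr rfl fun z _ => Finset.sum_congr rfl fun x _ => ?_
  rw [pi_rw_sym]
  ring

lemma dirichlet_eq (hd : ∀ x, 0 < deg G x) (f : V → ℝ) :
    dirichletForm G f = ∑ x, statDist G x * f x ^ 2
      - ∑ x, statDist G x * f x * (∑ z, rwKernel G x z * f z) := by
  unfold dirichletForm
  have key : ∑ x, ∑ z, statDist G x * rwKernel G x z * (f x - f z) ^ 2
      = ∑ x, ∑ z, (statDist G x * rwKernel G x z * f x ^ 2
        - 2 * (statDist G x * rwKernel G x z * (f x * f z))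
        + statDist G x * rwKernel G x z * f z ^ 2) :=
    Finset.sum_congr rfl fun x _ => Finset.sum_congr rfl fun z _ => by ring
  rw [key]
  have hsplit : ∀ x, ∑ z, (statDist G x * rwKernel G x z * f x ^ 2
        - 2 * (statDist G x * rwKernel G x z * (f x * f z))
        + statDist G x * rwKernel G x z * f z ^ 2)
      = (∑ z, statDist G x * rwKernel G x z * f x ^ 2)
        - 2 * (∑ z, statDist G x * rwKernel G x z * (f x * f z))
        + ∑ z, statDist G x * rwKernel G x z * f z ^ 2 := by
    intro x
    rw [Finset.sum_add_distrib, Finset.sum_sub_distrib, Finset.mul_sum]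
  simp_rw [hsplit]
  rw [Finset.sum_add_distrib, Finset.sum_sub_distrib, ← Finset.mul_sum]
  have hS1 : ∑ x, ∑ z, statDist G x * rwKernel G x z * f x ^ 2
      = ∑ x, statDist G x * f x ^ 2 := by
    refine Finset.sum_congr rfl fun x _ => ?_
    have h : ∑ z, statDist G x * rwKernel G x z * f x ^ 2
        = ∑ z, rwKernel G x z * (statDist G x * f x ^ 2) :=
      Finset.sum_congr rfl fun z _ => by ring
    rw [h, ← Finset.sum_mul, rw_rowsum G (hd x), one_mul]
  have hS3 : ∑ x, ∑ z, statDist G x * rwKernel G x z * f z ^ 2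
      = ∑ x, statDist G x * f x ^ 2 := by
    have h : ∑ x, ∑ z, statDist G x * rwKernel G x z * f z ^ 2
        = ∑ x, ∑ z, statDist G z * rwKernel G z x * f z ^ 2 :=
      Finset.sum_congr rfl fun x _ => Finset.sum_congr rfl fun z _ => by rw [pi_rw_sym]
    rw [h, Finset.sum_comm]
    refine Finset.sum_congr rfl fun z _ => ?_
    have h2 : ∑ x, statDist G z * rwKernel G z x * f z ^ 2
        = ∑ x, rwKernel G z x * (statDist G z * f z ^ 2) :=
      Finset.sum_congr rfl fun x _ => by ring
    rw [h2, ← Finset.sum_mul, rw_rowsum G (hd z), one_mul]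
  have hS2 : ∑ x, ∑ z, statDist G x * rwKernel G x z * (f x * f z)
      = ∑ x, statDist G x * f x * (∑ z, rwKernel G x z * f z) := (cross_eq G f f).symm
  rw [hS1, hS3, hS2]
  ring

lemma piVar_eq (hsum1 : ∑ x, statDist G x = 1) (f : V → ℝ) :
    piVar G f = ∑ x, statDist G x * f x ^ 2 - (∑ x, statDist G x * f x) ^ 2 := by
  unfold piVar
  set μ := ∑ z, statDist G z * f z with hμ
  have key : ∀ x, statDist G x * (f x - μ) ^ 2
      = statDist G x * f x ^ 2 - 2 * μ * (statDist G x * f x) + μ ^ 2 * statDist G x :=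
    fun x => by ring
  simp_rw [key]
  rw [Finset.sum_add_distrib, Finset.sum_sub_distrib, ← Finset.mul_sum, ← Finset.mul_sum,
    hsum1, ← hμ]
  ring

lemma piVar_pair (hsum1 : ∑ x, statDist G x = 1) (f : V → ℝ) :
    piVar G f = (1/2) * ∑ x, ∑ y, statDist G x * statDist G y * (f x - f y) ^ 2 := by
  rw [piVar_eq G hsum1]
  have key : ∑ x, ∑ y, statDist G x * statDist G y * (f x - f y) ^ 2
      = ∑ x, ∑ y, ((statDist G x * f x ^ 2) * statDist G y
        - (2 * (statDist G x * f x)) * (statDist G y * f y)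
        + statDist G x * (statDist G y * f y ^ 2)) :=
    Finset.sum_congr rfl fun x _ => Finset.sum_congr rfl fun y _ => by ring
  rw [key]
  simp only [Finset.sum_add_distrib, Finset.sum_sub_distrib]
  rw [← Finset.sum_mul_sum, ← Finset.sum_mul_sum, ← Finset.sum_mul_sum, hsum1]
  have h2 : ∑ x, 2 * (statDist G x * f x) = 2 * ∑ x, statDist G x * f x := by
    rw [Finset.mul_sum]
  rw [h2]
  ring

lemma dirichlet_nonneg (f : V → ℝ) : 0 ≤ dirichletForm G f := by
  unfold dirichletForm
  have : 0 ≤ ∑ x, ∑ y, statDist G x * rwKernel G x y * (f x - f y) ^ 2 :=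
    Finset.sum_nonneg fun x _ => Finset.sum_nonneg fun y _ =>
      mul_nonneg (mul_nonneg (statDist_nonneg G x) (rw_nonneg G x y)) (sq_nonneg _)
  linarith

lemma piVar_nonneg (f : V → ℝ) : 0 ≤ piVar G f :=
  Finset.sum_nonneg fun x _ => mul_nonneg (statDist_nonneg G x) (sq_nonneg _)

lemma gap_le (f : V → ℝ) (hf : piVar G f ≠ 0) :
    specGap G ≤ dirichletForm G f / piVar G f := by
  apply csInf_le
  · exact ⟨0, fun r ⟨g, hg, hr⟩ => hr ▸ div_nonneg (dirichlet_nonneg G g) (piVar_nonneg G g)⟩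
  · exact ⟨f, hf, rfl⟩

lemma walk_bound (f : V → ℝ) {x y : V} (p : G.Walk x y) :
    |f x - f y| ≤ (p.length : ℝ) *
      Real.sqrt (∑ u, ∑ v, if G.Adj u v then (f u - f v) ^ 2 else 0) := by
  have hEnn : (0:ℝ) ≤ ∑ u, ∑ v, if G.Adj u v then (f u - f v) ^ 2 else 0 :=
    Finset.sum_nonneg fun u _ => Finset.sum_nonneg fun v _ => by
      split
      · exact sq_nonneg _
      · exact le_refl 0
  induction p with
  | nil => simp
  | @cons u v w huv p ih =>
    have h1 : (f u - f v) ^ 2 ≤ ∑ u', ∑ v', if G.Adj u' v' then (f u' - f v') ^ 2 else 0 := by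
      calc (f u - f v) ^ 2 = (if G.Adj u v then (f u - f v) ^ 2 else 0) := (if_pos huv).symm
        _ ≤ ∑ v', if G.Adj u v' then (f u - f v') ^ 2 else 0 :=
            Finset.single_le_sum (f := fun v' => if G.Adj u v' then (f u - f v') ^ 2 else 0)
              (fun i _ => by by_cases h : G.Adj u i <;> simp [h, sq_nonneg]) (mem_univ v)
        _ ≤ ∑ u', ∑ v', if G.Adj u' v' then (f u' - f v') ^ 2 else 0 :=
            Finset.single_le_sum
              (f := fun u' => ∑ v', if G.Adj u' v' then (f u' - f v') ^ 2 else 0)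
              (fun i _ => Finset.sum_nonneg fun v' _ => by
                by_cases h : G.Adj i v' <;> simp [h, sq_nonneg]) (mem_univ u)
    have h2 : |f u - f v| ≤ Real.sqrt (∑ u, ∑ v, if G.Adj u v then (f u - f v) ^ 2 else 0) := by
      rw [← Real.sqrt_sq_eq_abs]
      exact Real.sqrt_le_sqrt h1
    calc |f u - f w| ≤ |f u - f v| + |f v - f w| := abs_sub_le _ _ _
      _ ≤ Real.sqrt (∑ u, ∑ v, if G.Adj u v then (f u - f v) ^ 2 else 0)
          + (p.length : ℝ) * Real.sqrt (∑ u, ∑ v, if G.Adj u v then (f u - f v) ^ 2 else 0) :=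
        add_le_add h2 ih
      _ = (((SimpleGraph.Walk.cons huv p).length : ℝ)) *
          Real.sqrt (∑ u, ∑ v, if G.Adj u v then (f u - f v) ^ 2 else 0) := by
        rw [SimpleGraph.Walk.length_cons]
        push_cast
        ring

lemma diff_sq_le (hconn : G.Connected) (f : V → ℝ) (x y : V) :
    (f x - f y) ^ 2 ≤ ((Fintype.card V : ℝ)) ^ 2 *
      ∑ u, ∑ v, if G.Adj u v then (f u - f v) ^ 2 else 0 := by
  have hEnn : (0:ℝ) ≤ ∑ u, ∑ v, if G.Adj u v then (f u - f v) ^ 2 else 0 :=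
    Finset.sum_nonneg fun u _ => Finset.sum_nonneg fun v _ => by
      split
      · exact sq_nonneg _
      · exact le_refl 0
  obtain ⟨p⟩ := hconn x y
  have hlen : (p.bypass.length : ℝ) ≤ (Fintype.card V : ℝ) := by
    exact_mod_cast le_of_lt p.bypass_isPath.length_lt
  have h := walk_bound G f p.bypass
  have habs : |f x - f y| ≤ (Fintype.card V : ℝ) *
      Real.sqrt (∑ u, ∑ v, if G.Adj u v then (f u - f v) ^ 2 else 0) :=
    le_trans h (mul_le_mul_of_nonneg_right hlen (Real.sqrt_nonneg _))
  calc (f x - f y) ^ 2 = |f x - f y| ^ 2 := (sq_abs _).symm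
    _ ≤ ((Fintype.card V : ℝ) *
        Real.sqrt (∑ u, ∑ v, if G.Adj u v then (f u - f v) ^ 2 else 0)) ^ 2 := by
      apply pow_le_pow_left₀ (abs_nonneg _) habs
    _ = ((Fintype.card V : ℝ)) ^ 2 *
        ∑ u, ∑ v, if G.Adj u v then (f u - f v) ^ 2 else 0 := by
      rw [mul_pow, Real.sq_sqrt hEnn]

lemma ess_eq (hd : ∀ x, 0 < deg G x) (hD : 0 < ∑ z, deg G z) (f : V → ℝ) :
    ∑ u, ∑ v, (if G.Adj u v then (f u - f v) ^ 2 else 0)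
      = 2 * (∑ z, deg G z) * dirichletForm G f := by
  unfold dirichletForm
  have key : ∀ u v, statDist G u * rwKernel G u v * (f u - f v) ^ 2
      = (1 / (∑ z, deg G z)) * (if G.Adj u v then (f u - f v) ^ 2 else 0) := by
    intro u v
    unfold statDist rwKernel
    by_cases h : G.Adj u v
    · rw [if_pos h, if_pos h]
      have hu : deg G u ≠ 0 := ne_of_gt (hd u)
      field_simp
    · rw [if_neg h, if_neg h]
      ring
  simp_rw [key]
  simp only [← Finset.mul_sum]
  have hDne : (∑ z, deg G z) ≠ 0 := ne_of_gt hD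
  field_simp

lemma gap_pos [Nonempty V] (hconn : G.Connected) (hd : ∀ x, 0 < deg G x)
    (hD : 0 < ∑ z, deg G z) (hsum1 : ∑ x, statDist G x = 1)
    (f₀ : V → ℝ) (hf₀ : piVar G f₀ ≠ 0) : 0 < specGap G := by
  have hcard : (0:ℝ) < (Fintype.card V : ℝ) := by
    exact_mod_cast Fintype.card_pos
  have hc : (0:ℝ) < 1 / ((Fintype.card V : ℝ) ^ 2 * (∑ z, deg G z)) := by positivity
  apply lt_of_lt_of_le hc
  have hmem : (dirichletForm G f₀ / piVar G f₀) ∈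
      {r : ℝ | ∃ f : V → ℝ, piVar G f ≠ 0 ∧ r = dirichletForm G f / piVar G f} := ⟨f₀, hf₀, rfl⟩
  apply le_csInf ⟨_, hmem⟩
  rintro r ⟨f, hf, rfl⟩
  have hvar : piVar G f ≤ (Fintype.card V : ℝ) ^ 2 * (∑ z, deg G z) * dirichletForm G f := by
    rw [piVar_pair G hsum1]
    set C := ((Fintype.card V : ℝ)) ^ 2 *
      ∑ u, ∑ v, if G.Adj u v then (f u - f v) ^ 2 else 0 with hC
    have h1 : ∑ x, ∑ y, statDist G x * statDist G y * (f x - f y) ^ 2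
        ≤ ∑ x, ∑ y, statDist G x * (statDist G y * C) := by
      refine Finset.sum_le_sum fun x _ => Finset.sum_le_sum fun y _ => ?_
      have := diff_sq_le G hconn f x y
      calc statDist G x * statDist G y * (f x - f y) ^ 2
          ≤ statDist G x * statDist G y * C :=
            mul_le_mul_of_nonneg_left (by rw [hC]; exact this)
              (mul_nonneg (statDist_nonneg G x) (statDist_nonneg G y))
        _ = statDist G x * (statDist G y * C) := by ring
    have h2 : ∑ x, ∑ y, statDist G x * (statDist G y * C) = C := by
      rw [← Finset.sum_mul_sum, hsum1, ← Finset.sum_mul, hsum1]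
      ring
    have h3 : C = (Fintype.card V : ℝ) ^ 2 * (2 * (∑ z, deg G z) * dirichletForm G f) := by
      rw [hC, ess_eq G hd hD f]
    have h4 : ∑ x, ∑ y, statDist G x * statDist G y * (f x - f y) ^ 2 ≤ C :=
      le_trans h1 (le_of_eq h2)
    rw [h3] at h4
    linarith
  have hvpos : 0 < piVar G f := lt_of_le_of_ne (piVar_nonneg G f) (Ne.symm hf)
  rw [le_div_iff₀ hvpos]
  have hne : ((Fintype.card V : ℝ) ^ 2 * (∑ z, deg G z)) ≠ 0 := by positivity
  rw [div_mul_eq_mul_div, one_mul, div_le_iff₀ (by positivity)]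
  calc piVar G f ≤ (Fintype.card V : ℝ) ^ 2 * (∑ z, deg G z) * dirichletForm G f := hvar
    _ = dirichletForm G f * ((Fintype.card V : ℝ) ^ 2 * ∑ z, deg G z) := by ring


lemma bilin_sym (f g : V → ℝ) :
    ∑ x, statDist G x * f x * (g x - ∑ z, rwKernel G x z * g z)
      = ∑ x, statDist G x * g x * (f x - ∑ z, rwKernel G x z * f z) := by
  have e : ∀ (u v : V → ℝ), ∑ x, statDist G x * u x * (v x - ∑ z, rwKernel G x z * v z)
      = ∑ x, statDist G x * u x * v x
        - ∑ x, statDist G x * u x * (∑ z, rwKernel G x z * v z) := by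
    intro u v
    rw [← Finset.sum_sub_distrib]
    exact Finset.sum_congr rfl fun x _ => by ring
  rw [e f g, e g f, selfadj G f g]
  congr 1
  exact Finset.sum_congr rfl fun x _ => by ring

lemma hit_inner (hd : ∀ x, 0 < deg G x) (hsum1 : ∑ x, statDist G x = 1)
    (H : V → V → ℝ) (hH0 : ∀ y, H y y = 0)
    (hHeq : ∀ y x, x ≠ y → H y x = 1 + ∑ z, rwKernel G x z * H y z)
    (f : V → ℝ) (y : V) :
    ∑ x, statDist G x * f x * (H y x - ∑ z, rwKernel G x z * H y z)
      = ∑ x, statDist G x * f x - f y := by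
  classical
  have hL1 : ∀ x, x ≠ y → H y x - ∑ z, rwKernel G x z * H y z = 1 := by
    intro x hx
    have := hHeq y x hx
    linarith
  have hone : ∑ x, statDist G x * (H y x - ∑ z, rwKernel G x z * H y z) = 0 := by
    have hzero : ∑ x, statDist G x * H y x
        * ((fun _ => (1:ℝ)) x - ∑ z, rwKernel G x z * (fun _ => (1:ℝ)) z) = 0 := by
      refine Finset.sum_eq_zero fun x _ => ?_
      have h1 : ∑ z, rwKernel G x z * (1:ℝ) = 1 := by
        simp only [mul_one]
        exact rw_rowsum G (hd x)
      simp only [h1]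
      ring
    have hs := bilin_sym G (fun _ => (1:ℝ)) (H y)
    rw [hzero] at hs
    rw [← hs]
    exact Finset.sum_congr rfl fun x _ => by ring
  have hsplit : ∀ (u : V → ℝ),
      ∑ x, statDist G x * u x * (H y x - ∑ z, rwKernel G x z * H y z)
      = (∑ x ∈ univ.erase y, statDist G x * u x)
        + statDist G y * u y * (H y y - ∑ z, rwKernel G y z * H y z) := by
    intro u
    rw [← Finset.sum_erase_add univ _ (mem_univ y)]
    congr 1
    refine Finset.sum_congr rfl fun x hx => ?_
    rw [hL1 x (Finset.mem_erase.1 hx).1, mul_one]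
  have herase : ∀ (u : V → ℝ), ∑ x ∈ univ.erase y, statDist G x * u x
      = ∑ x, statDist G x * u x - statDist G y * u y := by
    intro u
    rw [← Finset.sum_erase_add univ (fun x => statDist G x * u x) (mem_univ y)]
    ring
  have hone' : ∑ x, statDist G x * (1:ℝ) * (H y x - ∑ z, rwKernel G x z * H y z) = 0 := by
    rw [← hone]
    exact Finset.sum_congr rfl fun x _ => by ring
  have h1 := hsplit (fun _ => (1:ℝ))
  rw [hone'] at h1
  have herase1 : ∑ x ∈ univ.erase y, statDist G x * (1:ℝ) = 1 - statDist G y := by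
    rw [herase (fun _ => (1:ℝ))]
    simp only [mul_one]
    rw [hsum1]
  rw [herase1] at h1
  have hc : statDist G y * (H y y - ∑ z, rwKernel G y z * H y z) = statDist G y - 1 := by
    have e : statDist G y * (1:ℝ) * (H y y - ∑ z, rwKernel G y z * H y z)
        = statDist G y * (H y y - ∑ z, rwKernel G y z * H y z) := by ring
    rw [e] at h1
    linarith
  rw [hsplit f, herase f]
  have e2 : statDist G y * f y * (H y y - ∑ z, rwKernel G y z * H y z)
      = f y * (statDist G y * (H y y - ∑ z, rwKernel G y z * H y z)) := by ring
  rw [e2, hc]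
  ring

lemma hit_antisym (hd : ∀ x, 0 < deg G x) (hsum1 : ∑ x, statDist G x = 1)
    (H : V → V → ℝ) (hH0 : ∀ y, H y y = 0)
    (hHeq : ∀ y x, x ≠ y → H y x = 1 + ∑ z, rwKernel G x z * H y z)
    (a b : V) :
    H a b - ∑ x, statDist G x * H a x = H b a - ∑ x, statDist G x * H b x := by
  have h1 := hit_inner G hd hsum1 H hH0 hHeq (H b) a
  have h2 := bilin_sym G (H b) (H a)
  have h3 := hit_inner G hd hsum1 H hH0 hHeq (H a) b
  linarith

lemma hit_triangle [Nonempty V] (hconn : G.Connected) (hd : ∀ x, 0 < deg G x)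
    (H : V → V → ℝ) (hH0 : ∀ y, H y y = 0)
    (hHeq : ∀ y x, x ≠ y → H y x = 1 + ∑ z, rwKernel G x z * H y z)
    (hHnn : ∀ y x, 0 ≤ H y x) (y z : V) :
    ∀ x, H y x ≤ H z x + H y z := by
  have key := minprin G hconn hd (fun b => b = y ∨ b = z) y (Or.inl rfl)
    (fun x => H z x + H y z - H y x) ?_ ?_
  · intro x
    have := key x
    linarith
  · intro x hx
    rw [not_or] at hx
    obtain ⟨hx1, hx2⟩ := hx
    have e : ∑ w, rwKernel G x w * (H z w + H y z - H y w)
        = (∑ w, rwKernel G x w * H z w) + H y z - ∑ w, rwKernel G x w * H y w := by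
      have e1 : ∑ w, rwKernel G x w * (H z w + H y z - H y w)
          = ∑ w, (rwKernel G x w * H z w + rwKernel G x w * H y z
            - rwKernel G x w * H y w) :=
        Finset.sum_congr rfl fun w _ => by ring
      rw [e1, Finset.sum_sub_distrib, Finset.sum_add_distrib, ← Finset.sum_mul,
        rw_rowsum G (hd x), one_mul]
    rw [e]
    have h1 := hHeq z x hx2
    have h2 := hHeq y x hx1
    linarith
  · intro b hb
    rcases hb with hb | hb
    · rw [hb, hH0 y]
      have := hHnn z y
      have := hHnn y z
      linarith
    · rw [hb, hH0 z]
      linarith [hHnn y z]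

lemma tau_T (hd : ∀ x, 0 < deg G x) (hsum1 : ∑ x, statDist G x = 1)
    (H : V → V → ℝ) (hH0 : ∀ y, H y y = 0)
    (hHeq : ∀ y x, x ≠ y → H y x = 1 + ∑ z, rwKernel G x z * H y z)
    (x : V) :
    ∑ z, statDist G z * H z x
      = ∑ z, statDist G z * (∑ w, statDist G w * H z w) := by
  have e : ∀ z, statDist G z * H z x
      = statDist G z * H x z + statDist G z * (∑ w, statDist G w * H z w)
        - statDist G z * (∑ w, statDist G w * H x w) := by
    intro z
    have h := hit_antisym G hd hsum1 H hH0 hHeq z x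
    have h2 : H z x = H x z + (∑ w, statDist G w * H z w) - ∑ w, statDist G w * H x w := by
      linarith
    rw [h2]
    ring
  rw [Finset.sum_congr rfl fun z _ => e z, Finset.sum_sub_distrib, Finset.sum_add_distrib,
    ← Finset.sum_mul]
  rw [hsum1, one_mul]
  have : ∑ z, statDist G z * H x z = ∑ w, statDist G w * H x w := rfl
  rw [this]
  ring

lemma hit_le [Nonempty V] (hconn : G.Connected) (hd : ∀ x, 0 < deg G x)
    (hsum1 : ∑ x, statDist G x = 1)
    (H : V → V → ℝ) (hH0 : ∀ y, H y y = 0)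
    (hHeq : ∀ y x, x ≠ y → H y x = 1 + ∑ z, rwKernel G x z * H y z)
    (hHnn : ∀ y x, 0 ≤ H y x) (y x : V) :
    H y x ≤ (∑ z, statDist G z * (∑ w, statDist G w * H z w))
      + ∑ w, statDist G w * H y w := by
  have h1 : H y x = ∑ z, statDist G z * H y x := by
    rw [← Finset.sum_mul, hsum1, one_mul]
  have h2 : ∑ z, statDist G z * H y x ≤ ∑ z, statDist G z * (H z x + H y z) :=
    Finset.sum_le_sum fun z _ => mul_le_mul_of_nonneg_left
      (hit_triangle G hconn hd H hH0 hHeq hHnn y z x) (statDist_nonneg G z)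
  have h3 : ∑ z, statDist G z * (H z x + H y z)
      = ∑ z, statDist G z * H z x + ∑ z, statDist G z * H y z := by
    rw [← Finset.sum_add_distrib]
    exact Finset.sum_congr rfl fun z _ => by ring
  rw [tau_T G hd hsum1 H hH0 hHeq x] at h3
  linarith

lemma tau_bound [Nonempty V] (hd : ∀ x, 0 < deg G x)
    (hsum1 : ∑ x, statDist G x = 1) (hpi : ∀ x, 0 < statDist G x)
    (hgap : 0 < specGap G) (hc2 : 1 < Fintype.card V)
    (H : V → V → ℝ) (hH0 : ∀ y, H y y = 0)
    (hHeq : ∀ y x, x ≠ y → H y x = 1 + ∑ z, rwKernel G x z * H y z)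
    (hHnn : ∀ y x, 0 ≤ H y x) (y : V) :
    specGap G * ((∑ x, statDist G x * H y x) * statDist G y) ≤ 1 - statDist G y := by
  classical
  set g := specGap G with hg
  set τ := ∑ x, statDist G x * H y x with hτdef
  set S := ∑ x, statDist G x * (H y x) ^ 2 with hSdef
  set p := statDist G y with hpdef
  -- Dirichlet form of H y equals τ
  have hE : dirichletForm G (H y) = τ := by
    rw [dirichlet_eq G hd (H y)]
    have e1 : ∑ x, statDist G x * H y x ^ 2
        - ∑ x, statDist G x * H y x * (∑ z, rwKernel G x z * H y z)
        = ∑ x, statDist G x * H y x * (H y x - ∑ z, rwKernel G x z * H y z) := by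
      rw [← Finset.sum_sub_distrib]
      exact Finset.sum_congr rfl fun x _ => by ring
    rw [e1, hit_inner G hd hsum1 H hH0 hHeq (H y) y, hH0 y]
    simp [hτdef]
  have hVar : piVar G (H y) = S - τ ^ 2 := by
    rw [piVar_eq G hsum1 (H y), ← hSdef, ← hτdef]
  -- there is some x ≠ y
  obtain ⟨x₀, hx₀⟩ := Fintype.exists_ne_of_one_lt_card hc2 y
  -- τ > 0
  have hH1 : 1 ≤ H y x₀ := by
    have := hHeq y x₀ hx₀
    have hnn : 0 ≤ ∑ z, rwKernel G x₀ z * H y z :=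
      Finset.sum_nonneg fun z _ => mul_nonneg (rw_nonneg G x₀ z) (hHnn y z)
    linarith
  have hτpos : 0 < τ := by
    have h1 : statDist G x₀ * 1 ≤ statDist G x₀ * H y x₀ :=
      mul_le_mul_of_nonneg_left hH1 (statDist_nonneg G x₀)
    have h2 : statDist G x₀ * H y x₀ ≤ τ := by
      rw [hτdef]
      exact Finset.single_le_sum
        (f := fun x => statDist G x * H y x)
        (fun i _ => mul_nonneg (statDist_nonneg G i) (hHnn y i)) (mem_univ x₀)
    have := hpi x₀
    linarith
  -- Var > 0
  have hVarpos : 0 < piVar G (H y) := by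
    have h1 : statDist G y * (H y y - ∑ z, statDist G z * H y z) ^ 2 ≤ piVar G (H y) := by
      unfold piVar
      exact Finset.single_le_sum
        (f := fun x => statDist G x * (H y x - ∑ z, statDist G z * H y z) ^ 2)
        (fun i _ => mul_nonneg (statDist_nonneg G i) (sq_nonneg _)) (mem_univ y)
    rw [hH0 y] at h1
    have h2 : (0 - ∑ z, statDist G z * H y z) ^ 2 = τ ^ 2 := by
      rw [← hτdef]; ring
    rw [h2] at h1
    have := mul_pos (hpi y) (pow_pos hτpos 2)
    linarith
  -- p < 1
  have hp1 : p < 1 := by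
    have h1 : statDist G x₀ ≤ ∑ x ∈ univ.erase y, statDist G x :=
      Finset.single_le_sum (f := fun x => statDist G x)
        (fun i _ => statDist_nonneg G i) (mem_erase.2 ⟨hx₀, mem_univ x₀⟩)
    have h2 : ∑ x ∈ univ.erase y, statDist G x + p = 1 := by
      rw [hpdef, Finset.sum_erase_add univ _ (mem_univ y), hsum1]
    have := hpi x₀
    linarith
  -- Cauchy–Schwarz: τ² ≤ (1-p) S
  have hτerase : τ = ∑ x ∈ univ.erase y, statDist G x * H y x := by
    rw [hτdef, ← Finset.sum_erase_add univ (fun x => statDist G x * H y x) (mem_univ y),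
      hH0 y, mul_zero, add_zero]
  have hCS : τ ^ 2 ≤ (1 - p) * S := by
    have cs := Finset.sum_mul_sq_le_sq_mul_sq (univ.erase y)
      (fun x => Real.sqrt (statDist G x))
      (fun x => Real.sqrt (statDist G x) * H y x)
    have e1 : ∑ x ∈ univ.erase y,
        Real.sqrt (statDist G x) * (Real.sqrt (statDist G x) * H y x)
        = ∑ x ∈ univ.erase y, statDist G x * H y x :=
      Finset.sum_congr rfl fun x _ => by
        rw [← mul_assoc, Real.mul_self_sqrt (statDist_nonneg G x)]
    have e2 : ∑ x ∈ univ.erase y, (Real.sqrt (statDist G x)) ^ 2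
        = ∑ x ∈ univ.erase y, statDist G x :=
      Finset.sum_congr rfl fun x _ => Real.sq_sqrt (statDist_nonneg G x)
    have e3 : ∑ x ∈ univ.erase y, (Real.sqrt (statDist G x) * H y x) ^ 2
        = ∑ x ∈ univ.erase y, statDist G x * (H y x) ^ 2 :=
      Finset.sum_congr rfl fun x _ => by
        rw [mul_pow, Real.sq_sqrt (statDist_nonneg G x)]
    rw [e1, e2, e3] at cs
    have e4 : ∑ x ∈ univ.erase y, statDist G x = 1 - p := by
      have h2 : ∑ x ∈ univ.erase y, statDist G x + p = 1 := by
        rw [hpdef, Finset.sum_erase_add univ _ (mem_univ y), hsum1]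
      linarith
    have e5 : ∑ x ∈ univ.erase y, statDist G x * (H y x) ^ 2 ≤ S := by
      rw [hSdef]
      exact Finset.sum_le_sum_of_subset_of_nonneg (Finset.subset_univ _)
        fun i _ _ => mul_nonneg (statDist_nonneg G i) (sq_nonneg _)
    calc τ ^ 2 = (∑ x ∈ univ.erase y, statDist G x * H y x) ^ 2 := by rw [hτerase]
      _ ≤ (∑ x ∈ univ.erase y, statDist G x) * ∑ x ∈ univ.erase y, statDist G x * (H y x) ^ 2 := cs
      _ = (1 - p) * ∑ x ∈ univ.erase y, statDist G x * (H y x) ^ 2 := by rw [e4]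
      _ ≤ (1 - p) * S := mul_le_mul_of_nonneg_left e5 (by linarith)
  -- spectral gap inequality
  have hgle := gap_le G (H y) (ne_of_gt hVarpos)
  have hgv : g * piVar G (H y) ≤ dirichletForm G (H y) := by
    rw [hg]
    calc specGap G * piVar G (H y)
        ≤ (dirichletForm G (H y) / piVar G (H y)) * piVar G (H y) :=
          mul_le_mul_of_nonneg_right hgle (le_of_lt hVarpos)
      _ = dirichletForm G (H y) := div_mul_cancel₀ _ (ne_of_gt hVarpos)
  rw [hE, hVar] at hgv
  -- conclude: g * (τ * p) ≤ 1 - p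
  have k1 : g * τ ^ 2 ≤ g * ((1 - p) * S) :=
    mul_le_mul_of_nonneg_left hCS (le_of_lt hgap)
  have k2 : g * τ ^ 2 * p ≤ (1 - p) * τ := by
    have k3 := mul_le_mul_of_nonneg_right hgv (by linarith : (0:ℝ) ≤ 1 - p)
    nlinarith [k1, k3]
  have k4 : (g * (τ * p)) * τ ≤ ((1 - p)) * τ := by nlinarith [k2]
  exact le_of_mul_le_mul_right k4 hτpos


end Stmt6

/-- on a finite connected graph, the expected meeting times `M x y`
of two independent rate-1 random walks (characterized by `M x x = 0`, symmetry,
nonnegativity and the first-step equations) satisfy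
`max_{x,y} E[M_{x,y}] ≤ max_y (2 ∑_{x ≠ y} deg(x)) / (g(G) deg(y))`. -/
theorem stmt6 [Nonempty V] (G : SimpleGraph V) [DecidableRel G.Adj]
    (hconn : G.Connected) (M : V → V → ℝ)
    (hM0 : ∀ x, M x x = 0) (hMsym : ∀ x y, M x y = M y x) (hMnn : ∀ x y, 0 ≤ M x y)
    (hMeq : ∀ x y, x ≠ y →
      M x y = 1 / 2 + (1 / 2) * ∑ z, rwKernel G x z * M z y
            + (1 / 2) * ∑ z, rwKernel G y z * M x z) :
    ∀ x y, M x y ≤ Finset.univ.sup' Finset.univ_nonempty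
      (fun y' => 2 * (∑ x' ∈ Finset.univ.erase y', deg G x') / (specGap G * deg G y')) := by
  classical
  intro x y
  by_cases hcard : Fintype.card V ≤ 1
  · have hsub : Subsingleton V := Fintype.card_le_one_iff_subsingleton.mp hcard
    have hxy : x = y := Subsingleton.elim x y
    have hM : M x y = 0 := by rw [hxy, hM0]
    have he : (univ.erase y) = (∅ : Finset V) := by
      ext v
      simp only [mem_erase, mem_univ, and_true, Finset.notMem_empty, iff_false]
      intro hv
      exact hv (Subsingleton.elim v y)
    have hel : 2 * (∑ x' ∈ univ.erase y, deg G x') / (specGap G * deg G y) = 0 := by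
      rw [he, Finset.sum_empty, mul_zero, zero_div]
    rw [hM, ← hel]
    exact Finset.le_sup'
      (fun y' => 2 * (∑ x' ∈ univ.erase y', deg G x') / (specGap G * deg G y')) (mem_univ y)
  · push_neg at hcard
    have hc2 : 1 < Fintype.card V := hcard
    have hd : ∀ v, 0 < deg G v := by
      intro v
      obtain ⟨z, hz⟩ := Fintype.exists_ne_of_one_lt_card hc2 v
      obtain ⟨p⟩ := hconn v z
      cases p with
      | nil => exact absurd rfl hz
      | cons h q => exact Stmt6.deg_pos_of_adj G h
    have hD : 0 < ∑ z, deg G z := Finset.sum_pos (fun i _ => hd i) univ_nonempty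
    have hsum1 : ∑ v, statDist G v = 1 := by
      unfold statDist
      rw [← Finset.sum_div, div_self (ne_of_gt hD)]
    have hpi : ∀ v, 0 < statDist G v := fun v => div_pos (hd v) hD
    -- hitting times
    choose H hH0 hHeq hHnn using fun y' => Stmt6.exists_hitting G hconn hd y'
    -- the function x ↦ [x = y] has nonzero variance
    have hp1y : ∀ y' : V, statDist G y' < 1 := by
      intro y'
      obtain ⟨x₀, hx₀⟩ := Fintype.exists_ne_of_one_lt_card hc2 y'
      have h1 : statDist G x₀ ≤ ∑ v ∈ univ.erase y', statDist G v :=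
        Finset.single_le_sum (f := fun v => statDist G v)
          (fun i _ => Stmt6.statDist_nonneg G i) (mem_erase.2 ⟨hx₀, mem_univ x₀⟩)
      have h2 : ∑ v ∈ univ.erase y', statDist G v + statDist G y' = 1 := by
        rw [Finset.sum_erase_add univ _ (mem_univ y'), hsum1]
      have := hpi x₀
      linarith
    have hvar0 : piVar G (fun v => if v = y then (1:ℝ) else 0) ≠ 0 := by
      have hμ : ∑ z, statDist G z * (if z = y then (1:ℝ) else 0) = statDist G y := by
        rw [Finset.sum_eq_single y]
        · simp
        · intro b _ hb; simp [hb]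
        · intro hy; exact absurd (mem_univ y) hy
      have hterm : statDist G y
          * ((if y = y then (1:ℝ) else 0) - ∑ z, statDist G z * (if z = y then (1:ℝ) else 0)) ^ 2
          ≤ piVar G (fun v => if v = y then (1:ℝ) else 0) := by
        unfold piVar
        exact Finset.single_le_sum
          (f := fun v => statDist G v
            * ((if v = y then (1:ℝ) else 0) - ∑ z, statDist G z * (if z = y then (1:ℝ) else 0)) ^ 2)
          (fun i _ => mul_nonneg (Stmt6.statDist_nonneg G i) (sq_nonneg _)) (mem_univ y)
      rw [hμ] at hterm
      simp only [if_pos rfl] at hterm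
      have hpos : 0 < statDist G y * (1 - statDist G y) ^ 2 :=
        mul_pos (hpi y) (pow_pos (by linarith [hp1y y]) 2)
      have : 0 < piVar G (fun v => if v = y then (1:ℝ) else 0) := lt_of_lt_of_le hpos hterm
      exact ne_of_gt this
    have hgap : 0 < specGap G := Stmt6.gap_pos G hconn hd hD hsum1 _ hvar0
    -- tau and its sup
    set τ : V → ℝ := fun y' => ∑ v, statDist G v * H y' v with hτ
    set K := univ.sup' univ_nonempty τ with hK
    have hτK : ∀ y', τ y' ≤ K := fun y' => by
      rw [hK]; exact Finset.le_sup' τ (mem_univ y')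
    obtain ⟨ys, -, hys⟩ := Finset.exists_mem_eq_sup' (univ_nonempty) τ
    have hTK : (∑ z, statDist G z * τ z) ≤ K := by
      calc ∑ z, statDist G z * τ z ≤ ∑ z, statDist G z * K :=
            Finset.sum_le_sum fun z _ =>
              mul_le_mul_of_nonneg_left (hτK z) (Stmt6.statDist_nonneg G z)
        _ = K := by rw [← Finset.sum_mul, hsum1, one_mul]
    have hA : ∀ a b, H a b - τ a = H b a - τ b := by
      intro a b
      simp only [hτ]
      exact Stmt6.hit_antisym G hd hsum1 H hH0 hHeq a b
    -- comparison with the supersolution N(a,b) = H b a - τ b + K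
    have hcomp : ∀ a b, M a b - (H b a - τ b + K) ≤ 0 := by
      apply Stmt6.compare G hconn hd (fun a b => M a b - (H b a - τ b + K))
      · intro a
        have h0 : M a a = 0 := hM0 a
        have h1 : H a a = 0 := hH0 a
        have := hτK a
        simp only [h0, h1]
        linarith
      · intro a b hab
        have hs1 : ∑ z, rwKernel G a z * (M z b - (H b z - τ b + K))
            = (∑ z, rwKernel G a z * M z b) - ((H b a - 1) - τ b + K) := by
          have e : ∑ z, rwKernel G a z * (M z b - (H b z - τ b + K))
              = ∑ z, (rwKernel G a z * M z b - rwKernel G a z * H b z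
                  - rwKernel G a z * (K - τ b)) :=
            Finset.sum_congr rfl fun z _ => by ring
          rw [e, Finset.sum_sub_distrib, Finset.sum_sub_distrib, ← Finset.sum_mul,
            Stmt6.rw_rowsum G (hd a), one_mul]
          have h2 : ∑ z, rwKernel G a z * H b z = H b a - 1 := by
            have := hHeq b a hab
            linarith
          rw [h2]
          ring
        have hs2 : ∑ z, rwKernel G b z * (M a z - (H z a - τ z + K))
            = (∑ z, rwKernel G b z * M a z) - ((H b a - 1) - τ b + K) := by
          have e0 : ∀ z, M a z - (H z a - τ z + K) = M a z - (H a z - τ a + K) := by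
            intro z
            have := hA z a
            linarith
          have e : ∑ z, rwKernel G b z * (M a z - (H z a - τ z + K))
              = ∑ z, (rwKernel G b z * M a z - rwKernel G b z * H a z
                  - rwKernel G b z * (K - τ a)) :=
            Finset.sum_congr rfl fun z _ => by rw [e0 z]; ring
          rw [e, Finset.sum_sub_distrib, Finset.sum_sub_distrib, ← Finset.sum_mul,
            Stmt6.rw_rowsum G (hd b), one_mul]
          have h2 : ∑ z, rwKernel G b z * H a z = H a b - 1 := by
            have := hHeq a b (Ne.symm hab)
            linarith
          rw [h2]
          have h3 := hA a b
          ring_nf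
          linarith [hA a b]
        rw [hs1, hs2]
        have hM' := hMeq a b hab
        linarith
    have h1 : M x y ≤ H y x - τ y + K := by linarith [hcomp x y]
    have h2 : H y x ≤ (∑ z, statDist G z * τ z) + τ y := by
      have := Stmt6.hit_le G hconn hd hsum1 H hH0 hHeq hHnn y x
      simp only [hτ]
      exact this
    have h3 : M x y ≤ 2 * K := by linarith [hTK]
    -- conclude via ys
    have h4 := Stmt6.tau_bound G hd hsum1 hpi hgap hc2 H hH0 hHeq hHnn ys
    have h5 : 2 * τ ys ≤ 2 * (∑ x' ∈ univ.erase ys, deg G x') / (specGap G * deg G ys) := by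
      have hde : ∑ x' ∈ univ.erase ys, deg G x' = (∑ z, deg G z) - deg G ys := by
        rw [← Finset.sum_erase_add univ _ (mem_univ ys)]
        ring
      have hgd : 0 < specGap G * deg G ys := mul_pos hgap (hd ys)
      rw [le_div_iff₀ hgd]
      have hπ : statDist G ys = deg G ys / (∑ z, deg G z) := rfl
      have h4' : specGap G * (τ ys * (deg G ys / (∑ z, deg G z)))
          ≤ 1 - deg G ys / (∑ z, deg G z) := by
        have : τ ys = ∑ v, statDist G v * H ys v := by simp only [hτ]
        rw [this]
        rw [← hπ]
        exact h4
      have h6 := mul_le_mul_of_nonneg_right h4' (le_of_lt hD)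
      have hDne : (∑ z, deg G z) ≠ 0 := ne_of_gt hD
      rw [hde]
      field_simp at h6
      nlinarith [h6]
    calc M x y ≤ 2 * K := h3
      _ = 2 * τ ys := by rw [hK, hys]
      _ ≤ 2 * (∑ x' ∈ univ.erase ys, deg G x') / (specGap G * deg G ys) := h5
      _ ≤ univ.sup' univ_nonempty
          (fun y' => 2 * (∑ x' ∈ univ.erase y', deg G x') / (specGap G * deg G y')) :=
        Finset.le_sup'
          (fun y' => 2 * (∑ x' ∈ univ.erase y', deg G x') / (specGap G * deg G y'))
          (mem_univ ys)
end

section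
/- Let q be reversible with stationary distribution π on finite E, with zero trace, and let Π be the payoff matrix Π(1,1)=b-c, Π(1,0)=-c, Π(0,1)=b, Π(0,0)=0. Define A(x,ξ) = 1 - ∑_{z,z'} q(x,z)q(z,z') Π(ξ(z),ξ(z')) and B(y,ξ) = 1 - ∑_z q(y,z) Π(ξ(y),ξ(z)). Then ∑_{x,y} π(x) q(x,y) (ξ(y)-ξ(x)) (A(x,ξ)-B(y,ξ)) = b(E_π[ξ(X_0)(1-ξ(X_3))] - E_π[ξ(X_0)(1-ξ(X_1))]) - c E_π[ξ(X_0)(1-ξ(X_2))], where under E_π, (X_ℓ) is the stationary discrete-time q-chain with X_0 ∼ π. -/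
open Finset

/-- with the payoff `Π(σ,τ) = bτ - cσ`,
`A(x,ξ) = 1 - ∑_{z,z'} q(x,z)q(z,z')Π(ξ(z),ξ(z'))`,
`B(y,ξ) = 1 - ∑_z q(y,z)Π(ξ(y),ξ(z))`, one has
`∑_{x,y} π(x)q(x,y)(ξ(y)-ξ(x))(A(x,ξ)-B(y,ξ))
  = b(E_π[ξ(X₀)(1-ξ(X₃))] - E_π[ξ(X₀)(1-ξ(X₁))]) - c E_π[ξ(X₀)(1-ξ(X₂))]`,
where `E_π[ξ(X₀)(1-ξ(X_ℓ))] = ∑_{x,y} π(x) qℓ(x,y) ξ(x)(1-ξ(y))`. -/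
theorem stmt7 {E : Type*} [Fintype E] [DecidableEq E]
    (q : Matrix E E ℝ) (π : E → ℝ) (b c : ℝ) (ξ : E → ℝ)
    (hqnn : ∀ x y, 0 ≤ q x y) (hq0 : ∀ x, q x x = 0)
    (hrow : ∀ x, ∑ y, q x y = 1)
    (hirr : ∀ x y, ∃ n, 0 < n ∧ 0 < (q ^ n) x y)
    (hrev : ∀ x y, π x * q x y = π y * q y x)
    (hπnn : ∀ x, 0 ≤ π x) (hπ1 : ∑ x, π x = 1)
    (hξ : ∀ z, ξ z = 0 ∨ ξ z = 1) :
    ∑ x, ∑ y, π x * q x y * (ξ y - ξ x) *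
        ((1 - ∑ z, ∑ z', q x z * q z z' * (b * ξ z' - c * ξ z)) -
          (1 - ∑ z, q y z * (b * ξ z - c * ξ y)))
      = b * ((∑ x, ∑ y, π x * (q ^ 3) x y * ξ x * (1 - ξ y)) -
              ∑ x, ∑ y, π x * (q ^ 1) x y * ξ x * (1 - ξ y))
        - c * ∑ x, ∑ y, π x * (q ^ 2) x y * ξ x * (1 - ξ y) := by
  classical
  set f : E → ℝ := fun x => ∑ z, q x z * ξ z with hf
  set g : E → ℝ := fun x => ∑ z, q x z * f z with hg
  set h : E → ℝ := fun x => ∑ z, q x z * g z with hh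
  set S0 : ℝ := ∑ x, π x * ξ x with hS0
  set P1 : ℝ := ∑ x, π x * ξ x * f x with hP1
  set P2 : ℝ := ∑ x, π x * ξ x * g x with hP2
  set P3 : ℝ := ∑ x, π x * ξ x * h x with hP3
  have col : ∀ y, ∑ x, π x * q x y = π y := by
    intro y
    calc ∑ x, π x * q x y = ∑ x, π y * q y x := by
          exact Finset.sum_congr rfl fun x _ => hrev x y
      _ = π y := by rw [← Finset.mul_sum, hrow, mul_one]
  -- inner payoff sums
  have hB : ∀ y, ∑ z, q y z * (b * ξ z - c * ξ y) = b * f y - c * ξ y := by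
    intro y
    have : ∑ z, q y z * (b * ξ z - c * ξ y)
        = b * ∑ z, q y z * ξ z - c * ξ y * ∑ z, q y z := by
      rw [Finset.mul_sum, Finset.mul_sum, ← Finset.sum_sub_distrib]
      exact Finset.sum_congr rfl fun z _ => by ring
    rw [this, hrow, mul_one, hf]
  have hA : ∀ x, ∑ z, ∑ z', q x z * q z z' * (b * ξ z' - c * ξ z)
      = b * g x - c * f x := by
    intro x
    have step : ∀ z, ∑ z', q x z * q z z' * (b * ξ z' - c * ξ z)
        = q x z * (b * f z - c * ξ z) := by
      intro z
      rw [← hB z, Finset.mul_sum]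
      exact Finset.sum_congr rfl fun z' _ => by ring
    calc ∑ z, ∑ z', q x z * q z z' * (b * ξ z' - c * ξ z)
        = ∑ z, q x z * (b * f z - c * ξ z) :=
          Finset.sum_congr rfl fun z _ => step z
      _ = b * ∑ z, q x z * f z - c * ∑ z, q x z * ξ z := by
          rw [Finset.mul_sum, Finset.mul_sum, ← Finset.sum_sub_distrib]
          exact Finset.sum_congr rfl fun z _ => by ring
      _ = b * g x - c * f x := by rw [hg, hf]
  -- double sum evaluation lemmas
  have colS : ∀ w : E → ℝ, ∑ x, ∑ y, π x * q x y * w y = ∑ y, π y * w y := by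
    intro w
    rw [Finset.sum_comm]
    refine Finset.sum_congr rfl fun y _ => ?_
    rw [show (∑ x, π x * q x y * w y) = (∑ x, π x * q x y) * w y from
      (Finset.sum_mul ..).symm, col y]
  have rowS : ∀ w : E → ℝ, ∑ x, ∑ y, π x * q x y * w x = ∑ x, π x * w x := by
    intro w
    refine Finset.sum_congr rfl fun x _ => ?_
    calc ∑ y, π x * q x y * w x = π x * w x * ∑ y, q x y := by
          rw [Finset.mul_sum]
          exact Finset.sum_congr rfl fun y _ => by ring
      _ = π x * w x := by rw [hrow, mul_one]
  have mixS : ∀ u w : E → ℝ, ∑ x, ∑ y, π x * q x y * (u x * w y)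
      = ∑ x, π x * u x * (∑ y, q x y * w y) := by
    intro u w
    refine Finset.sum_congr rfl fun x _ => ?_
    rw [Finset.mul_sum]
    exact Finset.sum_congr rfl fun y _ => by ring
  have revS : ∀ u w : E → ℝ, ∑ x, ∑ y, π x * q x y * (u x * w y)
      = ∑ y, π y * w y * (∑ x, q y x * u x) := by
    intro u w
    rw [Finset.sum_comm]
    refine Finset.sum_congr rfl fun y _ => ?_
    rw [Finset.mul_sum]
    refine Finset.sum_congr rfl fun x _ => ?_
    rw [hrev x y]; ring
  -- the eight double sums
  have d1 : ∑ x, ∑ y, π x * q x y * (ξ y * f y) = P1 := by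
    rw [colS (fun y => ξ y * f y), hP1]
    exact Finset.sum_congr rfl fun y _ => by ring
  have d2 : ∑ x, ∑ y, π x * q x y * (ξ y * ξ y) = S0 := by
    rw [colS (fun y => ξ y * ξ y), hS0]
    refine Finset.sum_congr rfl fun y _ => ?_
    rcases hξ y with h' | h' <;> rw [h'] <;> ring
  have d3 : ∑ x, ∑ y, π x * q x y * (g x * ξ y) = P3 := by
    rw [revS g ξ, hP3]
  have d4 : ∑ x, ∑ y, π x * q x y * (f x * ξ y) = P2 := by
    rw [revS f ξ, hP2]
  have d5 : ∑ x, ∑ y, π x * q x y * (ξ x * f y) = P2 := by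
    rw [mixS ξ f, hP2]
  have d6 : ∑ x, ∑ y, π x * q x y * (ξ x * ξ y) = P1 := by
    rw [mixS ξ ξ, hP1]
  have d7 : ∑ x, ∑ y, π x * q x y * (ξ x * g x) = P2 := by
    rw [rowS (fun x => ξ x * g x), hP2]
    exact Finset.sum_congr rfl fun x _ => by ring
  have d8 : ∑ x, ∑ y, π x * q x y * (ξ x * f x) = P1 := by
    rw [rowS (fun x => ξ x * f x), hP1]
    exact Finset.sum_congr rfl fun x _ => by ring
  -- left-hand side
  have hL : ∑ x, ∑ y, π x * q x y * (ξ y - ξ x) *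
        ((1 - ∑ z, ∑ z', q x z * q z z' * (b * ξ z' - c * ξ z)) -
          (1 - ∑ z, q y z * (b * ξ z - c * ξ y)))
      = b * P1 - b * P3 - c * S0 + c * P2 := by
    calc ∑ x, ∑ y, π x * q x y * (ξ y - ξ x) *
          ((1 - ∑ z, ∑ z', q x z * q z z' * (b * ξ z' - c * ξ z)) -
            (1 - ∑ z, q y z * (b * ξ z - c * ξ y)))
        = ∑ x, ∑ y,
            (b * (π x * q x y * (ξ y * f y)) - c * (π x * q x y * (ξ y * ξ y))
              - b * (π x * q x y * (g x * ξ y)) + c * (π x * q x y * (f x * ξ y))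
              - b * (π x * q x y * (ξ x * f y)) + c * (π x * q x y * (ξ x * ξ y))
              + b * (π x * q x y * (ξ x * g x)) - c * (π x * q x y * (ξ x * f x))) := by
          refine Finset.sum_congr rfl fun x _ => Finset.sum_congr rfl fun y _ => ?_
          rw [hA x, hB y]; ring
      _ = b * (∑ x, ∑ y, π x * q x y * (ξ y * f y))
          - c * (∑ x, ∑ y, π x * q x y * (ξ y * ξ y))
          - b * (∑ x, ∑ y, π x * q x y * (g x * ξ y))
          + c * (∑ x, ∑ y, π x * q x y * (f x * ξ y))
          - b * (∑ x, ∑ y, π x * q x y * (ξ x * f y))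
          + c * (∑ x, ∑ y, π x * q x y * (ξ x * ξ y))
          + b * (∑ x, ∑ y, π x * q x y * (ξ x * g x))
          - c * (∑ x, ∑ y, π x * q x y * (ξ x * f x)) := by
          simp only [Finset.sum_add_distrib, Finset.sum_sub_distrib, ← Finset.mul_sum]
      _ = b * P1 - b * P3 - c * S0 + c * P2 := by
          rw [d1, d2, d3, d4, d5, d6, d7, d8]; ring
  -- generic right-hand-side term
  have gen : ∀ (M : Matrix E E ℝ) (w : E → ℝ), (∀ x, ∑ y, M x y = 1) →
      (∀ x, ∑ y, M x y * ξ y = w x) →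
      ∑ x, ∑ y, π x * M x y * ξ x * (1 - ξ y) = S0 - ∑ x, π x * ξ x * w x := by
    intro M w hMrow hMw
    rw [hS0, ← Finset.sum_sub_distrib]
    refine Finset.sum_congr rfl fun x _ => ?_
    calc ∑ y, π x * M x y * ξ x * (1 - ξ y)
        = π x * ξ x * (∑ y, M x y) - π x * ξ x * (∑ y, M x y * ξ y) := by
          rw [Finset.mul_sum, Finset.mul_sum, ← Finset.sum_sub_distrib]
          exact Finset.sum_congr rfl fun y _ => by ring
      _ = π x * ξ x - π x * ξ x * w x := by rw [hMrow, hMw, mul_one]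
  have q2app : ∀ x y, (q ^ 2) x y = ∑ z, q x z * q z y := by
    intro x y
    rw [pow_two, Matrix.mul_apply]
  have q3app : ∀ x y, (q ^ 3) x y = ∑ z, q x z * (q ^ 2) z y := by
    intro x y
    rw [show (3 : ℕ) = 1 + 2 from rfl, pow_add, pow_one, Matrix.mul_apply]
  have row2 : ∀ x, ∑ y, (q ^ 2) x y = 1 := by
    intro x
    simp only [q2app]
    rw [Finset.sum_comm]
    calc ∑ z, ∑ y, q x z * q z y = ∑ z, q x z * ∑ y, q z y := by
          exact Finset.sum_congr rfl fun z _ => (Finset.mul_sum ..).symm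
      _ = 1 := by simp only [hrow, mul_one]
  have app2 : ∀ x, ∑ y, (q ^ 2) x y * ξ y = g x := by
    intro x
    simp only [q2app, Finset.sum_mul]
    rw [Finset.sum_comm, hg]
    refine Finset.sum_congr rfl fun z _ => ?_
    rw [hf, Finset.mul_sum]
    exact Finset.sum_congr rfl fun y _ => by ring
  have row3 : ∀ x, ∑ y, (q ^ 3) x y = 1 := by
    intro x
    simp only [q3app]
    rw [Finset.sum_comm]
    calc ∑ z, ∑ y, q x z * (q ^ 2) z y = ∑ z, q x z * ∑ y, (q ^ 2) z y := by
          exact Finset.sum_congr rfl fun z _ => (Finset.mul_sum ..).symm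
      _ = 1 := by simp only [row2, mul_one]; exact hrow x
  have app3 : ∀ x, ∑ y, (q ^ 3) x y * ξ y = h x := by
    intro x
    simp only [q3app, Finset.sum_mul]
    rw [Finset.sum_comm, hh]
    refine Finset.sum_congr rfl fun z _ => ?_
    rw [← app2 z, Finset.mul_sum]
    exact Finset.sum_congr rfl fun y _ => by ring
  have hR1 : ∑ x, ∑ y, π x * (q ^ 1) x y * ξ x * (1 - ξ y) = S0 - P1 := by
    rw [hP1]
    exact gen (q ^ 1) f (by simpa using hrow) (by intro x; simp [pow_one, hf])
  have hR2 : ∑ x, ∑ y, π x * (q ^ 2) x y * ξ x * (1 - ξ y) = S0 - P2 := by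
    rw [hP2]; exact gen (q ^ 2) g row2 app2
  have hR3 : ∑ x, ∑ y, π x * (q ^ 3) x y * ξ x * (1 - ξ y) = S0 - P3 := by
    rw [hP3]; exact gen (q ^ 3) h row3 app3
  rw [hL, hR1, hR2, hR3]; ring
end

section
/- Under the same setting (payoff Π(σ,τ) = bτ - cσ, q reversible with stationary π, zero trace), with A and B as above, one has ∑_{x,y} π(x) q(x,y) (A(x,ξ)-B(y,ξ))² = b² (E_π[ξ(X_0)(1-ξ(X_4))] - E_π[ξ(X_0)(1-ξ(X_2))]) − 2bc (E_π[ξ(X_0)(1-ξ(X_3))] - E_π[ξ(X_0)(1-ξ(X_1))]) + c² E_π[ξ(X_0)(1-ξ(X_2))]. -/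
/-!
Write `⟪f, g⟫ = ∑ₓ π(x) f(x) g(x)` and `Sₖ = ⟪ξ, qᵏξ⟫`. Since `q` has unit row sums,
`B(y, ξ) = 1 - G(y)` and `A(x, ξ) = 1 - (qG)(x)` with `G = b qξ - cξ`. Reversibility makes `π`
stationary and `q` self-adjoint for `⟪·,·⟫`; hence
`∑ π(x) q(x,y) ((qG)(x) - G(y))² = ⟪G, G⟫ - ⟪qG, qG⟫`, and both squares expand into the `Sₖ`,
`k ≤ 4`. Finally `E_π[ξ(X₀)(1 - ξ(Xₖ))] = S₀ - Sₖ` because `ξ² = ξ`.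
-/

open Finset Matrix

section

variable {E : Type*} [Fintype E]

def Matrix.IsReversible (q : Matrix E E ℝ) (π : E → ℝ) : Prop :=
  ∀ x y, π x * q x y = π y * q y x

theorem Matrix.sum_pow_apply_eq_one [DecidableEq E] {q : Matrix E E ℝ}
    (hrow : ∀ x, ∑ y, q x y = 1) (k : ℕ) (x : E) : ∑ y, (q ^ k) x y = 1 := by
  have hq : q *ᵥ 1 = 1 := funext fun x => by simp [mulVec, dotProduct, hrow]
  have hqk : q ^ k *ᵥ 1 = 1 := by
    induction k with
    | zero => simp
    | succ k ih => rw [pow_succ, ← mulVec_mulVec, hq, ih]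
  simpa [mulVec, dotProduct] using congrFun hqk x

namespace Matrix.IsReversible

variable {q : Matrix E E ℝ} {π : E → ℝ}

theorem sum_mul_apply (hrev : q.IsReversible π) (hrow : ∀ x, ∑ y, q x y = 1) (y : E) :
    ∑ x, π x * q x y = π y := by
  simp only [hrev _ y, ← mul_sum, hrow, mul_one]

theorem sum_mulVec_mul_comm (hrev : q.IsReversible π) (f g : E → ℝ) :
    ∑ x, π x * (q *ᵥ f) x * g x = ∑ x, π x * f x * (q *ᵥ g) x := by
  simp only [mulVec, dotProduct, mul_sum, sum_mul]
  rw [sum_comm]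
  refine sum_congr rfl fun y _ => sum_congr rfl fun x _ => ?_
  linear_combination f y * g x * hrev x y

theorem sum_pow_mulVec_mul_comm [DecidableEq E] (hrev : q.IsReversible π) (f g : E → ℝ)
    (k : ℕ) : ∑ x, π x * (q ^ k *ᵥ f) x * g x = ∑ x, π x * f x * (q ^ k *ᵥ g) x := by
  induction k generalizing g with
  | zero => simp
  | succ k ih =>
    calc ∑ x, π x * (q ^ (k + 1) *ᵥ f) x * g x = ∑ x, π x * (q *ᵥ q ^ k *ᵥ f) x * g x := by
          rw [pow_succ', mulVec_mulVec]
      _ = ∑ x, π x * f x * (q ^ k *ᵥ q *ᵥ g) x := by rw [hrev.sum_mulVec_mul_comm, ih]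
      _ = ∑ x, π x * f x * (q ^ (k + 1) *ᵥ g) x := by rw [mulVec_mulVec, ← pow_succ]

theorem sum_pow_mulVec_mul_pow_mulVec [DecidableEq E] (hrev : q.IsReversible π) (f : E → ℝ)
    (i j : ℕ) :
    ∑ x, π x * (q ^ i *ᵥ f) x * (q ^ j *ᵥ f) x = ∑ x, π x * f x * (q ^ (i + j) *ᵥ f) x := by
  rw [hrev.sum_pow_mulVec_mul_comm, mulVec_mulVec, pow_add]

/-- The conditional variance of `G(X₁)` given `X₀`, averaged over `X₀ ∼ π`. -/
theorem sum_mul_sq_mulVec_sub (hrev : q.IsReversible π) (hrow : ∀ x, ∑ y, q x y = 1)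
    (G : E → ℝ) :
    ∑ x, ∑ y, π x * q x y * ((q *ᵥ G) x - G y) ^ 2
      = ∑ x, π x * G x * G x - ∑ x, π x * (q *ᵥ G) x * (q *ᵥ G) x := by
  have hrowx : ∀ x, ∑ y, π x * q x y * ((q *ᵥ G) x - G y) ^ 2
      = π x * (q *ᵥ G) x * (q *ᵥ G) x - 2 * (π x * (q *ᵥ G) x * (q *ᵥ G) x)
        + ∑ y, π x * q x y * (G y * G y) := by
    intro x
    set F := (q *ᵥ G) x with hF
    calc ∑ y, π x * q x y * (F - G y) ^ 2
        = ∑ y, (π x * F * F * q x y - 2 * (π x * F) * (q x y * G y)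
            + π x * q x y * (G y * G y)) := sum_congr rfl fun y _ => by ring
      _ = π x * F * F * ∑ y, q x y - 2 * (π x * F) * ∑ y, q x y * G y
            + ∑ y, π x * q x y * (G y * G y) := by
          rw [sum_add_distrib, sum_sub_distrib, mul_sum, mul_sum]
      _ = _ := by rw [hrow, ← dotProduct, ← mulVec, ← hF]; ring
  have hstat : ∑ x, ∑ y, π x * q x y * (G y * G y) = ∑ y, π y * G y * G y := by
    rw [sum_comm]
    refine sum_congr rfl fun y _ => ?_
    rw [← sum_mul, hrev.sum_mul_apply hrow, mul_assoc]
  simp only [hrowx, sum_add_distrib, sum_sub_distrib, hstat, ← mul_sum]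
  ring

end Matrix.IsReversible

theorem Matrix.sum_mul_pow_apply_mul_one_sub [DecidableEq E] {q : Matrix E E ℝ}
    (hrow : ∀ x, ∑ y, q x y = 1) (π f g : E → ℝ) (k : ℕ) :
    ∑ x, ∑ y, π x * (q ^ k) x y * f x * (1 - g y)
      = ∑ x, π x * f x - ∑ x, π x * f x * (q ^ k *ᵥ g) x := by
  rw [← sum_sub_distrib]
  refine sum_congr rfl fun x _ => ?_
  calc ∑ y, π x * (q ^ k) x y * f x * (1 - g y)
      = π x * f x * (∑ y, (q ^ k) x y - ∑ y, (q ^ k) x y * g y) := by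
        rw [← sum_sub_distrib, mul_sum]
        exact sum_congr rfl fun y _ => by ring
    _ = π x * f x - π x * f x * (q ^ k *ᵥ g) x := by
        rw [sum_pow_apply_eq_one hrow, ← dotProduct, ← mulVec]
        ring

theorem Matrix.sum_apply_mul_const_mul_sub {q : Matrix E E ℝ} (hrow : ∀ x, ∑ y, q x y = 1)
    (f : E → ℝ) (b a : ℝ) (x : E) : ∑ y, q x y * (b * f y - a) = b * (q *ᵥ f) x - a := by
  calc ∑ y, q x y * (b * f y - a) = b * ∑ y, q x y * f y - a * ∑ y, q x y := by
        rw [mul_sum, mul_sum, ← sum_sub_distrib]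
        exact sum_congr rfl fun y _ => by ring
    _ = b * (q *ᵥ f) x - a := by rw [hrow, mul_one]; rfl

theorem sum_mul_sub_mul_sq (π u v : E → ℝ) (a b : ℝ) :
    ∑ x, π x * (a * u x - b * v x) * (a * u x - b * v x)
      = a ^ 2 * ∑ x, π x * u x * u x - 2 * a * b * ∑ x, π x * u x * v x
        + b ^ 2 * ∑ x, π x * v x * v x := by
  simp only [mul_sum, ← sum_sub_distrib, ← sum_add_distrib]
  exact sum_congr rfl fun x _ => by ring

end

theorem stmt8_general {E : Type*} [Fintype E] [DecidableEq E]
    (q : Matrix E E ℝ) (π : E → ℝ) (b c : ℝ) (ξ : E → ℝ)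
    (hrow : ∀ x, ∑ y, q x y = 1)
    (hrev : ∀ x y, π x * q x y = π y * q y x)
    (hξ : ∀ z, ξ z = 0 ∨ ξ z = 1) :
    ∑ x, ∑ y, π x * q x y *
        ((1 - ∑ z, ∑ z', q x z * q z z' * (b * ξ z' - c * ξ z)) -
          (1 - ∑ z, q y z * (b * ξ z - c * ξ y))) ^ 2
      = b ^ 2 * ((∑ x, ∑ y, π x * (q ^ 4) x y * ξ x * (1 - ξ y)) -
                  ∑ x, ∑ y, π x * (q ^ 2) x y * ξ x * (1 - ξ y))
        - 2 * b * c * ((∑ x, ∑ y, π x * (q ^ 3) x y * ξ x * (1 - ξ y)) -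
                  ∑ x, ∑ y, π x * (q ^ 1) x y * ξ x * (1 - ξ y))
        + c ^ 2 * ∑ x, ∑ y, π x * (q ^ 2) x y * ξ x * (1 - ξ y) := by
  have hrev : q.IsReversible π := hrev
  let G : E → ℝ := fun y => b * (q ^ 1 *ᵥ ξ) y - c * (q ^ 0 *ᵥ ξ) y
  have hB : ∀ y, ∑ z, q y z * (b * ξ z - c * ξ y) = G y := fun y => by
    simp [G, sum_apply_mul_const_mul_sub hrow]
  have hA : ∀ x, ∑ z, ∑ z', q x z * q z z' * (b * ξ z' - c * ξ z) = (q *ᵥ G) x := fun x => by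
    simp only [mul_assoc, ← mul_sum, hB]
    rfl
  have hqG : q *ᵥ G = fun x => b * (q ^ 2 *ᵥ ξ) x - c * (q ^ 1 *ᵥ ξ) x := by
    change q *ᵥ (b • (q ^ 1 *ᵥ ξ) - c • (q ^ 0 *ᵥ ξ)) = b • (q ^ 2 *ᵥ ξ) - c • (q ^ 1 *ᵥ ξ)
    rw [mulVec_sub, mulVec_smul, mulVec_smul, mulVec_mulVec, mulVec_mulVec, ← pow_succ',
      ← pow_succ']
  have hE : ∀ k, ∑ x, ∑ y, π x * (q ^ k) x y * ξ x * (1 - ξ y)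
      = ∑ x, π x * ξ x * (q ^ 0 *ᵥ ξ) x - ∑ x, π x * ξ x * (q ^ k *ᵥ ξ) x := fun k => by
    rw [sum_mul_pow_apply_mul_one_sub hrow]
    congr 1
    refine sum_congr rfl fun x _ => ?_
    rcases hξ x with h | h <;> simp [h]
  calc _ = ∑ x, ∑ y, π x * q x y * ((q *ᵥ G) x - G y) ^ 2 := by
        refine sum_congr rfl fun x _ => sum_congr rfl fun y _ => ?_
        rw [hA, hB]
        ring
    _ = ∑ x, π x * G x * G x - ∑ x, π x * (q *ᵥ G) x * (q *ᵥ G) x :=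
        hrev.sum_mul_sq_mulVec_sub hrow G
    _ = _ := by
        rw [hqG, sum_mul_sub_mul_sq, sum_mul_sub_mul_sq]
        simp only [hrev.sum_pow_mulVec_mul_pow_mulVec, Nat.reduceAdd, hE]
        ring

/-- in the same setting as the previous statement,
`∑_{x,y} π(x)q(x,y)(A(x,ξ)-B(y,ξ))²
  = b²(E_π[ξ(X₀)(1-ξ(X₄))] - E_π[ξ(X₀)(1-ξ(X₂))])
    - 2bc(E_π[ξ(X₀)(1-ξ(X₃))] - E_π[ξ(X₀)(1-ξ(X₁))]) + c² E_π[ξ(X₀)(1-ξ(X₂))]`. -/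
theorem stmt8 {E : Type*} [Fintype E] [DecidableEq E]
    (q : Matrix E E ℝ) (π : E → ℝ) (b c : ℝ) (ξ : E → ℝ)
    (hqnn : ∀ x y, 0 ≤ q x y) (hq0 : ∀ x, q x x = 0)
    (hrow : ∀ x, ∑ y, q x y = 1)
    (hirr : ∀ x y, ∃ n, 0 < n ∧ 0 < (q ^ n) x y)
    (hrev : ∀ x y, π x * q x y = π y * q y x)
    (hπnn : ∀ x, 0 ≤ π x) (hπ1 : ∑ x, π x = 1)
    (hξ : ∀ z, ξ z = 0 ∨ ξ z = 1) :
    ∑ x, ∑ y, π x * q x y *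
        ((1 - ∑ z, ∑ z', q x z * q z z' * (b * ξ z' - c * ξ z)) -
          (1 - ∑ z, q y z * (b * ξ z - c * ξ y))) ^ 2
      = b ^ 2 * ((∑ x, ∑ y, π x * (q ^ 4) x y * ξ x * (1 - ξ y)) -
                  ∑ x, ∑ y, π x * (q ^ 2) x y * ξ x * (1 - ξ y))
        - 2 * b * c * ((∑ x, ∑ y, π x * (q ^ 3) x y * ξ x * (1 - ξ y)) -
                  ∑ x, ∑ y, π x * (q ^ 1) x y * ξ x * (1 - ξ y))
        + c ^ 2 * ∑ x, ∑ y, π x * (q ^ 2) x y * ξ x * (1 - ξ y) :=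
  stmt8_general q π b c ξ hrow hrev hξ
end

section
/- In the same setting, for distinct x, y ∈ E and Σ₁, Σ₂ ⊆ S, with H_{(Σ₁,Σ₂)}(ξ; x, y) = (1_{Σ₁}(ξ(x)) − μ̄(Σ₁))(1_{Σ₂}(ξ(y)) − μ̄(Σ₂)), one has L^{0,μ} H_{(Σ₁,Σ₂)}(·; x, y)(ξ) = ∑_z q(x,z)(H_{(Σ₁,Σ₂)}(ξ; z, y) − H_{(Σ₁,Σ₂)}(ξ; x, y)) + ∑_z q(y,z)(H_{(Σ₁,Σ₂)}(ξ; x, z) − H_{(Σ₁,Σ₂)}(ξ; x, y)) − 2μ(S) H_{(Σ₁,Σ₂)}(ξ; x, y). -/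
open Finset

/-- `μ̄(Σ) = μ(Σ)/μ(S)` (with `0/0 = 0`, which is automatic for real division). -/
noncomputable def mubar (μ : Fin 2 → ℝ) (Sig : Finset (Fin 2)) : ℝ :=
  (∑ σ ∈ Sig, μ σ) / (μ 0 + μ 1)

/-- The indicator `1_Σ(σ)`. -/
noncomputable def indic (Sig : Finset (Fin 2)) (σ : Fin 2) : ℝ :=
  if σ ∈ Sig then 1 else 0

/-- The two-point dual function
`H_{(Σ₁,Σ₂)}(ξ; x, y) = (1_{Σ₁}(ξ(x)) - μ̄(Σ₁))(1_{Σ₂}(ξ(y)) - μ̄(Σ₂))`. -/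
noncomputable def Hdual2 {E : Type*} (μ : Fin 2 → ℝ) (Sig1 Sig2 : Finset (Fin 2))
    (ξ : E → Fin 2) (x y : E) : ℝ :=
  (indic Sig1 (ξ x) - mubar μ Sig1) * (indic Sig2 (ξ y) - mubar μ Sig2)

/-- The voter flip rate `c(x,ξ) = ∑_y q(x,y)[ξ(x)(1-ξ(y)) + (1-ξ(x))ξ(y)]`. -/
noncomputable def flipRate {E : Type*} [Fintype E] (q : E → E → ℝ)
    (x : E) (ξ : E → Fin 2) : ℝ :=
  ∑ y, q x y * (((ξ x : ℕ) : ℝ) * (1 - ((ξ y : ℕ) : ℝ)) +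
    (1 - ((ξ x : ℕ) : ℝ)) * ((ξ y : ℕ) : ℝ))

/-- The voter-model-with-mutation generator `L^{0,μ}`. -/
noncomputable def voterGen {E : Type*} [Fintype E] [DecidableEq E]
    (q : E → E → ℝ) (μ : Fin 2 → ℝ) (F : (E → Fin 2) → ℝ) (ξ : E → Fin 2) : ℝ :=
  (∑ x, flipRate q x ξ * (F (Function.update ξ x (1 - ξ x)) - F ξ)) +
    ∑ x, ∑ σ : Fin 2, μ σ * (F (Function.update ξ x σ) - F ξ)


lemma mukey (μ : Fin 2 → ℝ) (hμ : ∀ σ, 0 ≤ μ σ) (Sig : Finset (Fin 2)) :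
    μ 0 * (indic Sig 0 - mubar μ Sig) + μ 1 * (indic Sig 1 - mubar μ Sig) = 0 := by
  have hs : μ 0 * indic Sig 0 + μ 1 * indic Sig 1 = ∑ σ ∈ Sig, μ σ := by
    have h : (∑ σ ∈ Sig, μ σ) = ∑ σ : Fin 2, if σ ∈ Sig then μ σ else 0 := by
      rw [Finset.sum_ite_mem, Finset.univ_inter]
    rw [h, Fin.sum_univ_two]
    unfold indic
    split_ifs <;> ring
  by_cases h : μ 0 + μ 1 = 0
  · have h0 : μ 0 = 0 := le_antisymm (by linarith [hμ 1]) (hμ 0)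
    have h1 : μ 1 = 0 := by linarith
    simp [h0, h1]
  · unfold mubar
    field_simp
    linear_combination (μ 0 + μ 1) * hs

lemma flipkey {E : Type*} [Fintype E] (q : E → E → ℝ) (x : E) (ξ : E → Fin 2)
    (φ : Fin 2 → ℝ) :
    flipRate q x ξ * (φ (1 - ξ x) - φ (ξ x)) = ∑ w, q x w * (φ (ξ w) - φ (ξ x)) := by
  unfold flipRate
  rw [Finset.sum_mul]
  refine Finset.sum_congr rfl fun w _ => ?_
  generalize ξ x = a
  generalize ξ w = b
  fin_cases a <;> fin_cases b <;> simp <;> ring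

/-- for `x ≠ y`,
`L^{0,μ} H_{(Σ₁,Σ₂)}(·;x,y)(ξ)
  = ∑_z q(x,z)(H(ξ;z,y) - H(ξ;x,y)) + ∑_z q(y,z)(H(ξ;x,z) - H(ξ;x,y))
    - 2μ(S) H(ξ;x,y)`. -/
theorem stmt10 {E : Type*} [Fintype E] [DecidableEq E]
    (q : E → E → ℝ) (μ : Fin 2 → ℝ)
    (hq0 : ∀ x, q x x = 0) (hμ : ∀ σ, 0 ≤ μ σ)
    (x y : E) (hxy : x ≠ y) (Sig1 Sig2 : Finset (Fin 2)) (ξ : E → Fin 2) :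
    voterGen q μ (fun η => Hdual2 μ Sig1 Sig2 η x y) ξ
      = (∑ z, q x z * (Hdual2 μ Sig1 Sig2 ξ z y - Hdual2 μ Sig1 Sig2 ξ x y))
        + (∑ z, q y z * (Hdual2 μ Sig1 Sig2 ξ x z - Hdual2 μ Sig1 Sig2 ξ x y))
        - 2 * (μ 0 + μ 1) * Hdual2 μ Sig1 Sig2 ξ x y := by
  classical
  simp only [voterGen]
  have hvan : ∀ z, z ≠ x → z ≠ y → ∀ v,
      Hdual2 μ Sig1 Sig2 (Function.update ξ z v) x y = Hdual2 μ Sig1 Sig2 ξ x y := by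
    intro z hzx hzy v
    unfold Hdual2
    rw [Function.update_of_ne hzx.symm, Function.update_of_ne hzy.symm]
  have split1 : ∀ (a : E → ℝ), (∀ z, z ≠ x → z ≠ y → a z = 0) →
      ∑ z, a z = a x + a y := by
    intro a ha
    have h : ∑ z ∈ ({x, y} : Finset E), a z = ∑ z, a z := by
      refine Finset.sum_subset (Finset.subset_univ _) ?_
      intro z _ hz
      simp only [Finset.mem_insert, Finset.mem_singleton, not_or] at hz
      exact ha z hz.1 hz.2
    rw [← h, Finset.sum_pair hxy]
  rw [split1 _ (fun z hzx hzy => by rw [hvan z hzx hzy]; ring),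
      split1 _ (fun z hzx hzy => by simp [hvan z hzx hzy])]
  have hx1 : ∀ v, Hdual2 μ Sig1 Sig2 (Function.update ξ x v) x y =
      (indic Sig1 v - mubar μ Sig1) * (indic Sig2 (ξ y) - mubar μ Sig2) := by
    intro v
    unfold Hdual2
    rw [Function.update_self, Function.update_of_ne hxy.symm]
  have hy1 : ∀ v, Hdual2 μ Sig1 Sig2 (Function.update ξ y v) x y =
      (indic Sig1 (ξ x) - mubar μ Sig1) * (indic Sig2 v - mubar μ Sig2) := by
    intro v
    unfold Hdual2
    rw [Function.update_self, Function.update_of_ne hxy]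
  have k1 : flipRate q x ξ *
      (Hdual2 μ Sig1 Sig2 (Function.update ξ x (1 - ξ x)) x y - Hdual2 μ Sig1 Sig2 ξ x y)
      = ∑ z, q x z * (Hdual2 μ Sig1 Sig2 ξ z y - Hdual2 μ Sig1 Sig2 ξ x y) := by
    rw [hx1]
    exact flipkey q x ξ
      (fun σ => (indic Sig1 σ - mubar μ Sig1) * (indic Sig2 (ξ y) - mubar μ Sig2))
  have k2 : flipRate q y ξ *
      (Hdual2 μ Sig1 Sig2 (Function.update ξ y (1 - ξ y)) x y - Hdual2 μ Sig1 Sig2 ξ x y)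
      = ∑ z, q y z * (Hdual2 μ Sig1 Sig2 ξ x z - Hdual2 μ Sig1 Sig2 ξ x y) := by
    rw [hy1]
    exact flipkey q y ξ
      (fun σ => (indic Sig1 (ξ x) - mubar μ Sig1) * (indic Sig2 σ - mubar μ Sig2))
  have m1 : (∑ σ : Fin 2, μ σ *
      (Hdual2 μ Sig1 Sig2 (Function.update ξ x σ) x y - Hdual2 μ Sig1 Sig2 ξ x y))
      = -((μ 0 + μ 1) * Hdual2 μ Sig1 Sig2 ξ x y) := by
    rw [Fin.sum_univ_two, hx1 0, hx1 1]
    have hk := mukey μ hμ Sig1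
    simp only [Hdual2]
    linear_combination (indic Sig2 (ξ y) - mubar μ Sig2) * hk
  have m2 : (∑ σ : Fin 2, μ σ *
      (Hdual2 μ Sig1 Sig2 (Function.update ξ y σ) x y - Hdual2 μ Sig1 Sig2 ξ x y))
      = -((μ 0 + μ 1) * Hdual2 μ Sig1 Sig2 ξ x y) := by
    rw [Fin.sum_univ_two, hy1 0, hy1 1]
    have hk := mukey μ hμ Sig2
    simp only [Hdual2]
    linear_combination (indic Sig1 (ξ x) - mubar μ Sig1) * hk
  rw [k1, k2, m1, m2]
  ring
end

section
/- In the same setting, for x ∈ E and Σ₁, Σ₂ ⊆ S, one has L^{0,μ} H_{(Σ₁,Σ₂)}(·; x, x)(ξ) = (2-per-coordinate coalescing generator applied at (x,x), i.e. L_{B,2}H_{(Σ₁,Σ₂)}(ξ; ·, ·)(x,x)) − μ(S) H_{(Σ₁,Σ₂)}(ξ; x, x) + μ(S)(μ̄(Σ₁ ∩ Σ₂) − μ̄(Σ₁)μ̄(Σ₂)), where L_{B,2}F(x,y) = ∑_z q(x,z)(F(z,y) − F(x,y)) + ∑_z q(y,z)(F(x,z) − F(x,y)) for x ≠ y, and for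 coalesced pairs the two coordinates move together: L_{B,2}F(x,x) = ∑_z q(x,z)(F(z,z) − F(x,x)). -/
open Finset

/-- The generator of a pair of coalescing `q`-chains: independent motion off the
diagonal, joint motion (`L_{B,2}F(x,x) = ∑_z q(x,z)(F(z,z) - F(x,x))`) on the
diagonal. -/
noncomputable def coalGen2 {E : Type*} [Fintype E] [DecidableEq E]
    (q : E → E → ℝ) (F : E → E → ℝ) (x y : E) : ℝ :=
  if x = y then ∑ z, q x z * (F z z - F x x)
  else (∑ z, q x z * (F z y - F x y)) + ∑ z, q y z * (F x z - F x y)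

lemma indic_inter (Sig1 Sig2 : Finset (Fin 2)) (σ : Fin 2) :
    indic (Sig1 ∩ Sig2) σ = indic Sig1 σ * indic Sig2 σ := by
  unfold indic
  by_cases h1 : σ ∈ Sig1 <;> by_cases h2 : σ ∈ Sig2 <;> simp [h1, h2]

lemma sum_indic (μ : Fin 2 → ℝ) (Sig : Finset (Fin 2)) :
    ∑ σ ∈ Sig, μ σ = μ 0 * indic Sig 0 + μ 1 * indic Sig 1 := by
  rw [← Finset.univ_inter Sig, ← Finset.sum_ite_mem, Fin.sum_univ_two]
  unfold indic
  by_cases h0 : (0:Fin 2) ∈ Sig <;> by_cases h1 : (1:Fin 2) ∈ Sig <;> simp [h0, h1]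

lemma mut_key (μ : Fin 2 → ℝ) (hμ : ∀ σ, 0 ≤ μ σ) (Sig1 Sig2 : Finset (Fin 2)) :
    μ 0 * ((indic Sig1 0 - mubar μ Sig1) * (indic Sig2 0 - mubar μ Sig2))
      + μ 1 * ((indic Sig1 1 - mubar μ Sig1) * (indic Sig2 1 - mubar μ Sig2))
      = (μ 0 + μ 1) * (mubar μ (Sig1 ∩ Sig2) - mubar μ Sig1 * mubar μ Sig2) := by
  by_cases hs : μ 0 + μ 1 = 0
  · have h0 : μ 0 = 0 := le_antisymm (by linarith [hμ 1]) (hμ 0)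
    have h1 : μ 1 = 0 := le_antisymm (by linarith [hμ 0]) (hμ 1)
    simp [h0, h1]
  · unfold mubar
    rw [sum_indic μ Sig1, sum_indic μ Sig2, sum_indic μ (Sig1 ∩ Sig2),
      indic_inter, indic_inter]
    field_simp
    ring

/-- for the coincident pair `(x,x)`,
`L^{0,μ} H_{(Σ₁,Σ₂)}(·;x,x)(ξ) = L_{B,2}H_{(Σ₁,Σ₂)}(ξ;·,·)(x,x)
  - μ(S) H_{(Σ₁,Σ₂)}(ξ;x,x) + μ(S)(μ̄(Σ₁∩Σ₂) - μ̄(Σ₁)μ̄(Σ₂))`. -/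
theorem stmt11 {E : Type*} [Fintype E] [DecidableEq E]
    (q : E → E → ℝ) (μ : Fin 2 → ℝ)
    (hq0 : ∀ x, q x x = 0) (hμ : ∀ σ, 0 ≤ μ σ)
    (x : E) (Sig1 Sig2 : Finset (Fin 2)) (ξ : E → Fin 2) :
    voterGen q μ (fun η => Hdual2 μ Sig1 Sig2 η x x) ξ
      = coalGen2 q (fun u v => Hdual2 μ Sig1 Sig2 ξ u v) x x
        - (μ 0 + μ 1) * Hdual2 μ Sig1 Sig2 ξ x x
        + (μ 0 + μ 1) * (mubar μ (Sig1 ∩ Sig2) - mubar μ Sig1 * mubar μ Sig2) := by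
  classical
  set G : Fin 2 → ℝ := fun σ =>
    (indic Sig1 σ - mubar μ Sig1) * (indic Sig2 σ - mubar μ Sig2) with hG
  have hH : ∀ η : E → Fin 2, Hdual2 μ Sig1 Sig2 η x x = G (η x) := fun η => rfl
  have key1 : (∑ y, flipRate q y ξ *
      ((fun η => Hdual2 μ Sig1 Sig2 η x x) (Function.update ξ y (1 - ξ y)) -
        (fun η => Hdual2 μ Sig1 Sig2 η x x) ξ)) =
      flipRate q x ξ * (G (1 - ξ x) - G (ξ x)) := by
    rw [Finset.sum_eq_single_of_mem x (Finset.mem_univ x)]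
    · simp only [hH, Function.update_self]
    · intro y _ hy
      simp only [hH, Function.update_of_ne (Ne.symm hy), sub_self, mul_zero]
  have key2 : (∑ y, ∑ σ : Fin 2, μ σ *
      ((fun η => Hdual2 μ Sig1 Sig2 η x x) (Function.update ξ y σ) -
        (fun η => Hdual2 μ Sig1 Sig2 η x x) ξ)) =
      ∑ σ : Fin 2, μ σ * (G σ - G (ξ x)) := by
    rw [Finset.sum_eq_single_of_mem x (Finset.mem_univ x)]
    · simp only [hH, Function.update_self]
    · intro y _ hy
      simp only [hH, Function.update_of_ne (Ne.symm hy), sub_self, mul_zero,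
        Finset.sum_const_zero]
  have key3 : flipRate q x ξ * (G (1 - ξ x) - G (ξ x)) =
      ∑ z, q x z * (G (ξ z) - G (ξ x)) := by
    unfold flipRate
    rw [Finset.sum_mul]
    refine Finset.sum_congr rfl fun z _ => ?_
    have h2 : ∀ t : Fin 2, t = 0 ∨ t = 1 := by decide
    rcases h2 (ξ x) with hx | hx <;> rcases h2 (ξ z) with hz | hz <;>
      rw [hx, hz] <;> norm_num <;> ring
  have key4 : (∑ σ : Fin 2, μ σ * (G σ - G (ξ x))) =
      (μ 0 + μ 1) * (mubar μ (Sig1 ∩ Sig2) - mubar μ Sig1 * mubar μ Sig2)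
        - (μ 0 + μ 1) * G (ξ x) := by
    rw [Fin.sum_univ_two]
    have := mut_key μ hμ Sig1 Sig2
    simp only [hG]
    ring_nf
    ring_nf at this
    linarith [this]
  have hHz : ∀ z : E, Hdual2 μ Sig1 Sig2 ξ z z = G (ξ z) := fun z => rfl
  rw [voterGen, key1, key2, key3, key4, coalGen2, if_pos rfl, hH ξ]
  simp only [hHz]
  ring
end
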